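/- arXiv:1503.01151 — 3 statements merged into one kernel-verified Lean document; each statement's English description precedes it below -/
import Mathlib

section
/- For any C*-algebra B, regard B ⊗ 𝒦 as a 𝒦-algebra via the nondegenerate homomorphism 1 ⊗ id: k ↦ 1_B ⊗ k from 𝒦 to M(B ⊗ 𝒦). Then the map b ↦ b ⊗ 1_𝒦 gives a C*-isomorphism of B onto the relative commutant C(B ⊗ 𝒦, 1 ⊗ id); in particular C(B ⊗ 𝒦, 1 ⊗ id) = B ⊗ 1_𝒦 inside M(B ⊗ 𝒦). -/
open scoped MultiplierAlgebra

noncomputable section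

/-! ## Framework

`𝓜(ℂ, A)` is the multiplier algebra `M(A)` of a (non-unital) C⋆-algebra `A`
(Mathlib's `DoubleCentralizer`), and `(a : 𝓜(ℂ, A))` is the canonical image of `a : A`
in it. -/

/-- A system of matrix units `{u i j}` (indexed by `ℕ`) in a non-unital C⋆-algebra `K`,
whose linear span is dense.  A C⋆-algebra carrying such a system is precisely (i.e., is
⋆-isomorphic to) the C⋆-algebra `𝒦` of compact operators on a separable
infinite-dimensional Hilbert space. -/
structure MatrixUnits (K : Type*) [NonUnitalCStarAlgebra K] where
  u : ℕ → ℕ → K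
  u_ne_zero : ∀ i j, u i j ≠ 0
  u_mul : ∀ i j k l, u i j * u k l = if j = k then u i l else 0
  star_u : ∀ i j, star (u i j) = u j i
  dense_span : Dense (Submodule.span ℂ (Set.range fun p : ℕ × ℕ => u p.1 p.2) : Set K)

/-- `K` is (a copy of) the C⋆-algebra `𝒦` of compact operators on a separable
infinite-dimensional Hilbert space. -/
def IsCompactOperatorsAlgebra (K : Type*) [NonUnitalCStarAlgebra K] : Prop :=
  Nonempty (MatrixUnits K)

/-- A homomorphism `φ : A → M(B)` is *nondegenerate* if `φ(A)·B` is dense in `B`. -/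
def Nondegenerate {A B : Type*} [NonUnitalCStarAlgebra A] [NonUnitalCStarAlgebra B]
    (φ : A →⋆ₙₐ[ℂ] 𝓜(ℂ, B)) : Prop :=
  ∀ b : B, (b : 𝓜(ℂ, B)) ∈
    closure (Submodule.span ℂ {x : 𝓜(ℂ, B) | ∃ (a : A) (c : B), x = φ a * c} : Set 𝓜(ℂ, B))

/-- The `A`-relative commutant `C(A, ι) = {a ∈ M(A) : ι(k)·a = a·ι(k) ∈ A for all k ∈ K}`
of a `K`-algebra `(A, ι)`. -/
def relComm {K A : Type*} [NonUnitalCStarAlgebra K] [NonUnitalCStarAlgebra A]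
    (ι : K →⋆ₙₐ[ℂ] 𝓜(ℂ, A)) : Set 𝓜(ℂ, A) :=
  {a | ∀ k : K, ι k * a = a * ι k ∧ a * ι k ∈ Set.range ((↑) : A → 𝓜(ℂ, A))}

/-- A witness that `T` is (a copy of) the spatial tensor product `B ⊗ K`: a bilinear,
multiplicative, star-preserving map on elementary tensors whose range has dense linear span
and which satisfies `‖b ⊗ k‖ = ‖b‖‖k‖`.  (Since the compact operators `𝒦` are nuclear and
simple, for `K = 𝒦` such data identifies `T` with the minimal tensor product `B ⊗ 𝒦`.) -/
structure CStarTensor (B K T : Type*) [NonUnitalCStarAlgebra B] [NonUnitalCStarAlgebra K]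
    [NonUnitalCStarAlgebra T] where
  tmul : B → K → T
  add_tmul : ∀ b b' k, tmul (b + b') k = tmul b k + tmul b' k
  tmul_add : ∀ b k k', tmul b (k + k') = tmul b k + tmul b k'
  smul_tmul : ∀ (c : ℂ) b k, tmul (c • b) k = c • tmul b k
  tmul_smul : ∀ (c : ℂ) b k, tmul b (c • k) = c • tmul b k
  tmul_mul_tmul : ∀ b b' k k', tmul b k * tmul b' k' = tmul (b * b') (k * k')
  star_tmul : ∀ b k, star (tmul b k) = tmul (star b) (star k)
  norm_tmul : ∀ b k, ‖tmul b k‖ = ‖b‖ * ‖k‖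
  dense_span : Dense (Submodule.span ℂ {x : T | ∃ b k, x = tmul b k} : Set T)

/-- `ι` is the canonical nondegenerate homomorphism `1 ⊗ id : K → M(B ⊗ K)`, characterized
by `(1 ⊗ k)·(b ⊗ k') = b ⊗ (k·k')` and `(b ⊗ k')·(1 ⊗ k) = b ⊗ (k'·k)`. -/
def IsOneTensorId {B K T : Type*} [NonUnitalCStarAlgebra B] [NonUnitalCStarAlgebra K]
    [NonUnitalCStarAlgebra T] (τ : CStarTensor B K T) (ι : K →⋆ₙₐ[ℂ] 𝓜(ℂ, T)) : Prop :=
  ∀ (k : K) (b : B) (k' : K),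
    ι k * (τ.tmul b k' : 𝓜(ℂ, T)) = (τ.tmul b (k * k') : 𝓜(ℂ, T)) ∧
      (τ.tmul b k' : 𝓜(ℂ, T)) * ι k = (τ.tmul b (k' * k) : 𝓜(ℂ, T))

/-!
Let `u i j` be matrix units of `K`. The projections `e n = ∑_{i<n} u i i` form a bounded
approximate unit, so `b ⊗ e n` converges strictly to a multiplier `b ⊗ 1` with
`(b ⊗ 1)(b' ⊗ k) = bb' ⊗ k`; as elementary tensors span a dense subspace, this makes
`b ↦ b ⊗ 1` an injective ⋆-homomorphism into the relative commutant.

Conversely, let `m` lie in the relative commutant and `p = u 0 0`. Then `m ι(p)` is an element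
of `B ⊗ K` fixed by the compression `x ↦ ι(p) x ι(p)`, whose range is `B ⊗ p` because
`p K p = ℂ p`; so `m ι(p) = b ⊗ p`. Commuting `m` past `ι(u i 0)` gives
`m ι(u i j) = b ⊗ u i j = (b ⊗ 1) ι(u i j)`, and the `ι(u i j)` determine a multiplier.
-/

open Filter Topology

theorem ContinuousLinearMap.apply_mem_of_dense_span {R E F : Type*} [Semiring R]
    [TopologicalSpace E] [AddCommMonoid E] [Module R E]
    [TopologicalSpace F] [AddCommMonoid F] [Module R F]
    (f : E →L[R] F) {s : Set E} (hs : Dense (Submodule.span R s : Set E))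
    {V : Submodule R F} (hV : IsClosed (V : Set F)) (h : ∀ x ∈ s, f x ∈ V) (x : E) :
    f x ∈ V := by
  have hspan : Set.MapsTo f (Submodule.span R s) V := fun y hy =>
    (Submodule.span_le (p := V.comap (f : E →ₗ[R] F))).2 h hy
  have hx := hspan.closure f.continuous (hs x)
  rwa [hV.closure_eq] at hx

theorem cauchySeq_apply_of_dense_span {𝕜 E F : Type*} [NontriviallyNormedField 𝕜]
    [NormedAddCommGroup E] [NormedSpace 𝕜 E] [NormedAddCommGroup F] [NormedSpace 𝕜 F]
    (f : ℕ → E →L[𝕜] F) {C : ℝ} (hf : ∀ n, ‖f n‖ ≤ C) {s : Set E}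
    (hs : Dense (Submodule.span 𝕜 s : Set E)) (h : ∀ x ∈ s, CauchySeq (f · x)) (x : E) :
    CauchySeq (f · x) := by
  -- Being Cauchy at `y` is convergence to `0` of the equicontinuous family `g` at `y`,
  -- a closed condition on `y`.
  let g : ℕ × ℕ → E →L[𝕜] F := fun p => f p.1 - f p.2
  have hcauchy : ∀ y, CauchySeq (f · y) ↔ Tendsto (g · y) atTop (𝓝 0) := fun y => by
    simp [g, cauchySeq_iff_tendsto_dist_atTop_0, dist_eq_norm,
      tendsto_zero_iff_norm_tendsto_zero]
  have hg : Equicontinuous ((↑) ∘ g) := ((NormedSpace.equicontinuous_TFAE g).out 5 1).1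
    (show ∃ C, ∀ p, ‖g p‖ ≤ C from
      ⟨C + C, fun p => (norm_sub_le _ _).trans (add_le_add (hf p.1) (hf p.2))⟩)
  let V : Submodule 𝕜 E :=
    { carrier := {y | Tendsto (g · y) atTop (𝓝 0)}
      add_mem' := fun ha hb => by simpa using ha.add hb
      zero_mem' := by simp
      smul_mem' := fun c y hy => by simpa using hy.const_smul c }
  have hV : IsClosed (V : Set E) := hg.isClosed_setOfPred_tendsto continuous_const
  exact (hcauchy x).2 <| (ContinuousLinearMap.id 𝕜 E).apply_mem_of_dense_span hs hV
    (fun y hy => (hcauchy y).1 (h y hy)) x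

namespace DoubleCentralizer

variable {A : Type*} [NonUnitalCStarAlgebra A]

theorem fst_apply_mul (m : 𝓜(ℂ, A)) (a b : A) : m.fst (a * b) = m.fst a * b := by
  have h : ∀ x : A, x * (m.fst (a * b) - m.fst a * b) = 0 := fun x => by
    rw [mul_sub, ← m.central, ← mul_assoc, m.central, mul_assoc, sub_self]
  exact sub_eq_zero.1 ((CStarRing.star_mul_self_eq_zero_iff _).1 (h _))

theorem snd_apply_mul (m : 𝓜(ℂ, A)) (a b : A) : m.snd (a * b) = a * m.snd b := by
  have h : ∀ x : A, (m.snd (a * b) - a * m.snd b) * x = 0 := fun x => by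
    rw [sub_mul, m.central, mul_assoc, ← m.central, ← mul_assoc, sub_self]
  exact sub_eq_zero.1 ((CStarRing.mul_star_self_eq_zero_iff _).1 (h _))

theorem mul_coe (m : 𝓜(ℂ, A)) (a : A) : m * (a : 𝓜(ℂ, A)) = (m.fst a : 𝓜(ℂ, A)) := by
  ext : 1
  refine Prod.ext (ContinuousLinearMap.ext fun y => ?_) (ContinuousLinearMap.ext fun y => ?_)
  · exact fst_apply_mul m a y
  · exact m.central y a

theorem coe_mul (a : A) (m : 𝓜(ℂ, A)) : (a : 𝓜(ℂ, A)) * m = (m.snd a : 𝓜(ℂ, A)) := by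
  ext : 1
  refine Prod.ext (ContinuousLinearMap.ext fun y => ?_) (ContinuousLinearMap.ext fun y => ?_)
  · exact (m.central a y).symm
  · exact snd_apply_mul m y a

theorem coe_injective : Function.Injective ((↑) : A → 𝓜(ℂ, A)) := fun a b h => by
  have hab : a * star (a - b) = b * star (a - b) :=
    congrArg (fun m : 𝓜(ℂ, A) => m.fst (star (a - b))) h
  rw [← sub_eq_zero, ← CStarRing.mul_star_self_eq_zero_iff, sub_mul, hab, sub_self]

theorem coe_zero : ((0 : A) : 𝓜(ℂ, A)) = 0 := map_zero (coeHom (𝕜 := ℂ) (A := A))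

theorem coe_add (a b : A) : ((a + b : A) : 𝓜(ℂ, A)) = a + b :=
  map_add (coeHom (𝕜 := ℂ) (A := A)) a b

theorem coe_smul (c : ℂ) (a : A) : ((c • a : A) : 𝓜(ℂ, A)) = c • (a : 𝓜(ℂ, A)) :=
  map_smul (coeHom (𝕜 := ℂ) (A := A)) c a

theorem coe_mul_coe (a b : A) : (a : 𝓜(ℂ, A)) * b = ((a * b : A) : 𝓜(ℂ, A)) :=
  (map_mul (coeHom (𝕜 := ℂ) (A := A)) a b).symm

theorem coe_star (a : A) : ((star a : A) : 𝓜(ℂ, A)) = star (a : 𝓜(ℂ, A)) :=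
  map_star (coeHom (𝕜 := ℂ) (A := A)) a

theorem ext_of_mul_coe {s : Set A} (hs : Dense (Submodule.span ℂ s : Set A))
    {m₁ m₂ : 𝓜(ℂ, A)} (h : ∀ a ∈ s, m₁ * (a : 𝓜(ℂ, A)) = m₂ * a) : m₁ = m₂ := by
  have hfst : m₁.fst = m₂.fst := ContinuousLinearMap.ext_on hs fun a ha =>
    coe_injective (by rw [← mul_coe, ← mul_coe, h a ha])
  rw [← sub_eq_zero, ← norm_eq_zero, ← norm_fst, sub_fst, hfst, sub_self, norm_zero]

section StrictLimit

variable (a : ℕ → A) (hl : ∀ x, CauchySeq (a · * x)) (hr : ∀ x, CauchySeq (x * a ·))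

/-- The limit of `a` in the strict topology. -/
def strictLim : 𝓜(ℂ, A) where
  fst := continuousLinearMapOfTendsto (fun n => ContinuousLinearMap.mul ℂ A (a n))
    (tendsto_pi_nhds.2 fun x => (hl x).tendsto_limUnder)
  snd := continuousLinearMapOfTendsto (fun n => (ContinuousLinearMap.mul ℂ A).flip (a n))
    (tendsto_pi_nhds.2 fun x => (hr x).tendsto_limUnder)
  central x y := by
    have hxy := (hr x).tendsto_limUnder.mul_const y
    simp only [mul_assoc] at hxy
    exact tendsto_nhds_unique hxy ((hl y).tendsto_limUnder.const_mul x)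

theorem tendsto_strictLim_fst (x : A) :
    Tendsto (a · * x) atTop (𝓝 ((strictLim a hl hr).fst x)) :=
  (hl x).tendsto_limUnder

theorem tendsto_strictLim_snd (x : A) :
    Tendsto (x * a ·) atTop (𝓝 ((strictLim a hl hr).snd x)) :=
  (hr x).tendsto_limUnder

end StrictLimit

end DoubleCentralizer

namespace MatrixUnits

variable {K : Type*} [NonUnitalCStarAlgebra K] (M : MatrixUnits K)

def approxUnit (n : ℕ) : K := ∑ i ∈ Finset.range n, M.u i i

theorem approxUnit_mul_u (n i j : ℕ) :
    M.approxUnit n * M.u i j = if i < n then M.u i j else 0 := by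
  simp [approxUnit, Finset.sum_mul, M.u_mul]

theorem u_mul_approxUnit (n i j : ℕ) :
    M.u i j * M.approxUnit n = if j < n then M.u i j else 0 := by
  simp [approxUnit, Finset.mul_sum, M.u_mul]

theorem isStarProjection_approxUnit (n : ℕ) : IsStarProjection (M.approxUnit n) where
  isIdempotentElem := by
    rw [IsIdempotentElem]
    conv_lhs => rw [approxUnit, Finset.mul_sum]
    exact Finset.sum_congr rfl fun i hi => by
      rw [← approxUnit, approxUnit_mul_u, if_pos (Finset.mem_range.1 hi)]
  isSelfAdjoint := by simp [IsSelfAdjoint, approxUnit, star_sum, M.star_u]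

theorem norm_approxUnit_le (n : ℕ) : ‖M.approxUnit n‖ ≤ 1 :=
  (M.isStarProjection_approxUnit n).norm_le

theorem norm_u_self (i : ℕ) : ‖M.u i i‖ = 1 := by
  have h : ‖M.u i i‖ * ‖M.u i i‖ = ‖M.u i i‖ := by
    rw [← CStarRing.norm_star_mul_self, M.star_u, M.u_mul, if_pos rfl]
  exact (mul_eq_left₀ (norm_ne_zero_iff.2 (M.u_ne_zero i i))).1 h

theorem u_mul_mul_u_mem_span (i : ℕ) (k : K) : M.u i i * k * M.u i i ∈ ℂ ∙ M.u i i := by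
  refine (ContinuousLinearMap.mulLeftRight ℂ K (M.u i i) (M.u i i)).apply_mem_of_dense_span
    M.dense_span (Submodule.closed_of_finiteDimensional _) ?_ k
  rintro _ ⟨⟨j, l⟩, rfl⟩
  rcases eq_or_ne j i with rfl | hji <;> rcases eq_or_ne l j with rfl | hlj <;>
    simp [*, M.u_mul, Ne.symm, Submodule.mem_span_singleton_self]

end MatrixUnits

namespace CStarTensor

variable {B K T : Type*} [NonUnitalCStarAlgebra B] [NonUnitalCStarAlgebra K]
  [NonUnitalCStarAlgebra T] (τ : CStarTensor B K T) (M : MatrixUnits K)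

open DoubleCentralizer MatrixUnits

def tmulLeft (b : B) : K →L[ℂ] T :=
  LinearMap.mkContinuous
    { toFun := τ.tmul b
      map_add' := τ.tmul_add b
      map_smul' := fun c k => τ.tmul_smul c b k } ‖b‖
    (fun k => (τ.norm_tmul b k).le)

def tmulRight (k : K) : B →ₗ[ℂ] T where
  toFun b := τ.tmul b k
  map_add' b b' := τ.add_tmul b b' k
  map_smul' c b := τ.smul_tmul c b k

theorem zero_tmul (k : K) : τ.tmul 0 k = 0 := (τ.tmulRight k).map_zero

theorem isClosed_range_tmul_u (i : ℕ) :
    IsClosed (LinearMap.range (τ.tmulRight (M.u i i)) : Set T) := by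
  have hiso : Isometry (τ.tmulRight (M.u i i)) := AddMonoidHomClass.isometry_of_norm _
    fun b => by simp [tmulRight, τ.norm_tmul, M.norm_u_self]
  exact hiso.isClosedEmbedding.isClosed_range

theorem dense_span_tmul_u :
    Dense (Submodule.span ℂ {x : T | ∃ b i j, x = τ.tmul b (M.u i j)} : Set T) := by
  set S := Submodule.span ℂ {x : T | ∃ b i j, x = τ.tmul b (M.u i j)}
  have htmul : ∀ b k, τ.tmul b k ∈ S.topologicalClosure := fun b k =>
    (τ.tmulLeft b).apply_mem_of_dense_span M.dense_span S.isClosed_topologicalClosure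
      (by rintro _ ⟨⟨i, j⟩, rfl⟩
          exact S.le_topologicalClosure (Submodule.subset_span ⟨b, i, j, rfl⟩)) k
  have hclosure : Dense (S.topologicalClosure : Set T) :=
    τ.dense_span.mono (Submodule.span_le.2 (by rintro _ ⟨b, k, rfl⟩; exact htmul b k))
  rw [Submodule.topologicalClosure_coe] at hclosure
  exact hclosure.of_closure

theorem tmul_approxUnit_mul_tmul_u (b b' : B) {n i : ℕ} (j : ℕ) (h : i < n) :
    τ.tmul b (M.approxUnit n) * τ.tmul b' (M.u i j) = τ.tmul (b * b') (M.u i j) := by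
  rw [τ.tmul_mul_tmul, approxUnit_mul_u, if_pos h]

theorem tmul_u_mul_tmul_approxUnit (b b' : B) (i : ℕ) {n j : ℕ} (h : j < n) :
    τ.tmul b' (M.u i j) * τ.tmul b (M.approxUnit n) = τ.tmul (b' * b) (M.u i j) := by
  rw [τ.tmul_mul_tmul, u_mul_approxUnit, if_pos h]

theorem norm_tmul_approxUnit_le (b : B) (n : ℕ) :
    ‖τ.tmul b (M.approxUnit n)‖ ≤ ‖b‖ := by
  rw [τ.norm_tmul]
  exact mul_le_of_le_one_right (norm_nonneg b) (M.norm_approxUnit_le n)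

theorem cauchySeq_tmul_approxUnit_mul (b : B) (x : T) :
    CauchySeq fun n => τ.tmul b (M.approxUnit n) * x :=
  cauchySeq_apply_of_dense_span
    (fun n => ContinuousLinearMap.mul ℂ T (τ.tmul b (M.approxUnit n)))
    (fun n => (ContinuousLinearMap.opNorm_mul_apply_le ℂ T _).trans
      (τ.norm_tmul_approxUnit_le M b n))
    (τ.dense_span_tmul_u M)
    (by
      rintro _ ⟨b', i, j, rfl⟩
      exact (tendsto_atTop_of_eventually_const (i₀ := i + 1) fun n hn =>
        τ.tmul_approxUnit_mul_tmul_u M b b' j hn).cauchySeq)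
    x

theorem cauchySeq_mul_tmul_approxUnit (b : B) (x : T) :
    CauchySeq fun n => x * τ.tmul b (M.approxUnit n) :=
  cauchySeq_apply_of_dense_span
    (fun n => (ContinuousLinearMap.mul ℂ T).flip (τ.tmul b (M.approxUnit n)))
    (fun n => (ContinuousLinearMap.opNorm_mul_flip_apply ℂ _).le.trans
      (τ.norm_tmul_approxUnit_le M b n))
    (τ.dense_span_tmul_u M)
    (by
      rintro _ ⟨b', i, j, rfl⟩
      exact (tendsto_atTop_of_eventually_const (i₀ := j + 1) fun n hn =>
        τ.tmul_u_mul_tmul_approxUnit M b b' i hn).cauchySeq)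
    x

def tensorOne (b : B) : 𝓜(ℂ, T) :=
  strictLim (fun n => τ.tmul b (M.approxUnit n)) (τ.cauchySeq_tmul_approxUnit_mul M b)
    (τ.cauchySeq_mul_tmul_approxUnit M b)

theorem tensorOne_mul_tmul (b b' : B) (k : K) :
    τ.tensorOne M b * (τ.tmul b' k : 𝓜(ℂ, T)) = (τ.tmul (b * b') k : 𝓜(ℂ, T)) := by
  have h : (τ.tensorOne M b).fst ∘L τ.tmulLeft b' = τ.tmulLeft (b * b') := by
    refine ContinuousLinearMap.ext_on M.dense_span ?_
    rintro _ ⟨⟨i, j⟩, rfl⟩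
    exact tendsto_nhds_unique (tendsto_strictLim_fst _ (τ.cauchySeq_tmul_approxUnit_mul M b)
      (τ.cauchySeq_mul_tmul_approxUnit M b) _)
      (tendsto_atTop_of_eventually_const (i₀ := i + 1) fun n hn =>
        τ.tmul_approxUnit_mul_tmul_u M b b' j hn)
  rw [mul_coe]
  exact congrArg _ (congrArg (· k) h)

theorem tmul_mul_tensorOne (b b' : B) (k : K) :
    (τ.tmul b' k : 𝓜(ℂ, T)) * τ.tensorOne M b = (τ.tmul (b' * b) k : 𝓜(ℂ, T)) := by
  have h : (τ.tensorOne M b).snd ∘L τ.tmulLeft b' = τ.tmulLeft (b' * b) := by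
    refine ContinuousLinearMap.ext_on M.dense_span ?_
    rintro _ ⟨⟨i, j⟩, rfl⟩
    exact tendsto_nhds_unique (tendsto_strictLim_snd _ (τ.cauchySeq_tmul_approxUnit_mul M b)
      (τ.cauchySeq_mul_tmul_approxUnit M b) _)
      (tendsto_atTop_of_eventually_const (i₀ := j + 1) fun n hn =>
        τ.tmul_u_mul_tmul_approxUnit M b b' i hn)
  rw [coe_mul]
  exact congrArg _ (congrArg (· k) h)

theorem ext_of_mul_tmul {m₁ m₂ : 𝓜(ℂ, T)}
    (h : ∀ b k, m₁ * (τ.tmul b k : 𝓜(ℂ, T)) = m₂ * τ.tmul b k) : m₁ = m₂ :=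
  ext_of_mul_coe τ.dense_span (by rintro _ ⟨b, k, rfl⟩; exact h b k)

def tensorOneHom : B →⋆ₙₐ[ℂ] 𝓜(ℂ, T) where
  toFun := τ.tensorOne M
  map_add' b b' := τ.ext_of_mul_tmul fun x k => by
    simp only [add_mul, tensorOne_mul_tmul, τ.add_tmul, coe_add]
  map_smul' c b := τ.ext_of_mul_tmul fun x k => by
    simp only [smul_mul_assoc, tensorOne_mul_tmul, τ.smul_tmul, coe_smul, MonoidHom.id_apply]
  map_zero' := τ.ext_of_mul_tmul fun x k => by
    simp only [zero_mul, tensorOne_mul_tmul, τ.zero_tmul, coe_zero]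
  map_mul' b b' := τ.ext_of_mul_tmul fun x k => by
    simp only [mul_assoc, tensorOne_mul_tmul]
  map_star' b := τ.ext_of_mul_tmul fun x k => by
    rw [tensorOne_mul_tmul, ← star_star (τ.tmul x k : 𝓜(ℂ, T)), ← star_mul, ← coe_star,
      τ.star_tmul, tmul_mul_tensorOne, ← coe_star, τ.star_tmul, star_mul, star_star, star_star]

theorem tensorOneHom_injective : Function.Injective (τ.tensorOneHom M) := by
  refine (injective_iff_map_eq_zero _).2 fun b hb => ?_
  have h : τ.tmul (b * star b) (M.u 0 0) = 0 := coe_injective (by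
    rw [← tensorOne_mul_tmul, coe_zero]
    exact (congrArg (· * _) hb).trans (zero_mul _))
  have hnorm := congrArg norm h
  rw [τ.norm_tmul, M.norm_u_self, mul_one, norm_zero, norm_eq_zero,
    CStarRing.mul_star_self_eq_zero_iff] at hnorm
  exact hnorm

end CStarTensor

namespace IsOneTensorId

open DoubleCentralizer MatrixUnits CStarTensor

variable {B K T : Type*} [NonUnitalCStarAlgebra B] [NonUnitalCStarAlgebra K]
  [NonUnitalCStarAlgebra T] {τ : CStarTensor B K T} {ι : K →⋆ₙₐ[ℂ] 𝓜(ℂ, T)}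

theorem fst_tmul (hι : IsOneTensorId τ ι) (k : K) (b : B) (k' : K) :
    (ι k).fst (τ.tmul b k') = τ.tmul b (k * k') :=
  coe_injective (by rw [← mul_coe]; exact (hι k b k').1)

theorem snd_tmul (hι : IsOneTensorId τ ι) (k : K) (b : B) (k' : K) :
    (ι k).snd (τ.tmul b k') = τ.tmul b (k' * k) :=
  coe_injective (by rw [← coe_mul]; exact (hι k b k').2)

theorem tensorOne_mul (hι : IsOneTensorId τ ι) (M : MatrixUnits K) (b : B) (k : K) :
    τ.tensorOne M b * ι k = (τ.tmul b k : 𝓜(ℂ, T)) :=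
  τ.ext_of_mul_tmul fun x k' => by
    rw [mul_assoc, (hι k x k').1, tensorOne_mul_tmul, DoubleCentralizer.coe_mul_coe,
      τ.tmul_mul_tmul]

theorem mul_tensorOne (hι : IsOneTensorId τ ι) (M : MatrixUnits K) (b : B) (k : K) :
    ι k * τ.tensorOne M b = (τ.tmul b k : 𝓜(ℂ, T)) :=
  τ.ext_of_mul_tmul fun x k' => by
    rw [mul_assoc, tensorOne_mul_tmul, (hι k _ k').1, DoubleCentralizer.coe_mul_coe,
      τ.tmul_mul_tmul]

theorem tensorOne_mem_relComm (hι : IsOneTensorId τ ι) (M : MatrixUnits K) (b : B) :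
    τ.tensorOne M b ∈ relComm ι := fun k =>
  ⟨by rw [hι.mul_tensorOne, hι.tensorOne_mul], _, (hι.tensorOne_mul M b k).symm⟩

theorem ext_of_mul_u (hι : IsOneTensorId τ ι) (M : MatrixUnits K) {m₁ m₂ : 𝓜(ℂ, T)}
    (h : ∀ i j, m₁ * ι (M.u i j) = m₂ * ι (M.u i j)) : m₁ = m₂ := by
  refine ext_of_mul_coe (τ.dense_span_tmul_u M) ?_
  rintro _ ⟨x, i, j, rfl⟩
  have hx : (τ.tmul x (M.u i j) : 𝓜(ℂ, T)) = ι (M.u i j) * τ.tmul x (M.u j j) := by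
    rw [(hι _ _ _).1, M.u_mul, if_pos rfl]
  rw [hx, ← mul_assoc, ← mul_assoc, h]

theorem exists_iota_mul_coe_mul_iota_eq (hι : IsOneTensorId τ ι) (M : MatrixUnits K) (i : ℕ)
    (t : T) : ∃ b, ι (M.u i i) * (t : 𝓜(ℂ, T)) * ι (M.u i i) = τ.tmul b (M.u i i) := by
  let Q : T →L[ℂ] T := (ι (M.u i i)).snd ∘L (ι (M.u i i)).fst
  have hQ : ι (M.u i i) * (t : 𝓜(ℂ, T)) * ι (M.u i i) = (Q t : 𝓜(ℂ, T)) := by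
    rw [mul_coe, coe_mul]; rfl
  have hQ_tmul : ∀ b' k, Q (τ.tmul b' k) ∈ LinearMap.range (τ.tmulRight (M.u i i)) := by
    intro b' k
    obtain ⟨c, hc⟩ := Submodule.mem_span_singleton.1 (M.u_mul_mul_u_mem_span i k)
    refine ⟨c • b', ?_⟩
    simp only [Q, ContinuousLinearMap.comp_apply, hι.fst_tmul, hι.snd_tmul]
    rw [← hc]
    exact (τ.smul_tmul c b' _).trans (τ.tmul_smul c b' _).symm
  obtain ⟨b, hb⟩ := Q.apply_mem_of_dense_span τ.dense_span (τ.isClosed_range_tmul_u M i)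
    (by rintro _ ⟨b', k, rfl⟩; exact hQ_tmul b' k) t
  exact ⟨b, by rw [hQ, ← hb]; rfl⟩

theorem exists_tensorOne_eq (hι : IsOneTensorId τ ι) (M : MatrixUnits K) {m : 𝓜(ℂ, T)}
    (hm : m ∈ relComm ι) : ∃ b, τ.tensorOne M b = m := by
  set p := M.u 0 0
  obtain ⟨t, ht⟩ := (hm p).2
  have hp : ι p * ι p = ι p := by rw [← map_mul, M.u_mul, if_pos rfl]
  have hcorner : ι p * (t : 𝓜(ℂ, T)) * ι p = t := by
    rw [ht, ← mul_assoc, (hm p).1, mul_assoc, hp, mul_assoc, hp]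
  obtain ⟨b, hb⟩ := hι.exists_iota_mul_coe_mul_iota_eq M 0 t
  have hmp : m * ι p = τ.tmul b p := ht.symm.trans (hcorner.symm.trans hb)
  refine ⟨b, hι.ext_of_mul_u M fun i j => ?_⟩
  have hu : M.u i j = M.u i 0 * p * M.u 0 j := by simp [p, M.u_mul]
  calc τ.tensorOne M b * ι (M.u i j) = τ.tmul b (M.u i j) := hι.tensorOne_mul M b _
    _ = ι (M.u i 0) * τ.tmul b p * ι (M.u 0 j) := by rw [(hι _ _ _).1, (hι _ _ _).2, ← hu]
    _ = ι (M.u i 0) * (m * ι p) * ι (M.u 0 j) := by rw [hmp]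
    _ = m * ι (M.u i j) := by
      rw [← mul_assoc, (hm _).1, hu, map_mul, map_mul]
      simp only [mul_assoc]

end IsOneTensorId

theorem relComm_oneTensorId_eq_tensor_one_general
    {K B T : Type*} [NonUnitalCStarAlgebra K] [NonUnitalCStarAlgebra B]
    [NonUnitalCStarAlgebra T]
    (hK : IsCompactOperatorsAlgebra K)
    (τ : CStarTensor B K T)
    (ι : K →⋆ₙₐ[ℂ] 𝓜(ℂ, T)) (hι₁ : IsOneTensorId τ ι) :
    ∃ ψ : B →⋆ₙₐ[ℂ] 𝓜(ℂ, T), Function.Injective ψ ∧ Set.range ψ = relComm ι ∧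
      ∀ (b b' : B) (k : K),
        ψ b * (τ.tmul b' k : 𝓜(ℂ, T)) = (τ.tmul (b * b') k : 𝓜(ℂ, T)) ∧
          (τ.tmul b' k : 𝓜(ℂ, T)) * ψ b = (τ.tmul (b' * b) k : 𝓜(ℂ, T)) := by
  obtain ⟨M⟩ := hK
  refine ⟨τ.tensorOneHom M, τ.tensorOneHom_injective M, ?_, fun b b' k =>
    ⟨τ.tensorOne_mul_tmul M b b' k, τ.tmul_mul_tensorOne M b b' k⟩⟩
  refine Set.Subset.antisymm ?_ fun m hm => hι₁.exists_tensorOne_eq M hm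
  rintro _ ⟨b, rfl⟩
  exact hι₁.tensorOne_mem_relComm M b

/-- For any C⋆-algebra `B`, regard the spatial tensor product `T = B ⊗ 𝒦`
as a `𝒦`-algebra via `1 ⊗ id : k ↦ 1_B ⊗ k`.  Then `b ↦ b ⊗ 1_𝒦` is a C⋆-isomorphism of
`B` onto the relative commutant `C(B ⊗ 𝒦, 1 ⊗ id)`; in particular
`C(B ⊗ 𝒦, 1 ⊗ id) = B ⊗ 1_𝒦` inside `M(B ⊗ 𝒦)`.  Here the multiplier `b ⊗ 1_𝒦` is
characterized by `(b ⊗ 1)·(b' ⊗ k) = (b·b') ⊗ k` and `(b' ⊗ k)·(b ⊗ 1) = (b'·b) ⊗ k`. -/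
theorem relComm_oneTensorId_eq_tensor_one
    {K B T : Type*} [NonUnitalCStarAlgebra K] [NonUnitalCStarAlgebra B]
    [NonUnitalCStarAlgebra T]
    (hK : IsCompactOperatorsAlgebra K)
    (τ : CStarTensor B K T)
    (ι : K →⋆ₙₐ[ℂ] 𝓜(ℂ, T)) (hι₁ : IsOneTensorId τ ι) (hι₂ : Nondegenerate ι) :
    ∃ ψ : B →⋆ₙₐ[ℂ] 𝓜(ℂ, T), Function.Injective ψ ∧ Set.range ψ = relComm ι ∧
      ∀ (b b' : B) (k : K),
        ψ b * (τ.tmul b' k : 𝓜(ℂ, T)) = (τ.tmul (b * b') k : 𝓜(ℂ, T)) ∧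
          (τ.tmul b' k : 𝓜(ℂ, T)) * ψ b = (τ.tmul (b' * b) k : 𝓜(ℂ, T)) :=
  relComm_oneTensorId_eq_tensor_one_general hK τ ι hι₁
end
end

section
/- If (A, ι) is a 𝒦-algebra, then the multiplier algebra of the relative commutant is M(C(A, ι)) = {a ∈ M(A) : ι(k)a = aι(k) for all k ∈ 𝒦}, where M(C(A, ι)) is identified with a subalgebra of M(A) via the nondegenerate inclusion C(A, ι) ⊂ M(A). -/
open scoped MultiplierAlgebra

noncomputable section

/-! If `a` multiplies `C(A, ι)` into itself, then `d = ι(k)a - aι(k)` annihilates `C(A, ι)`;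
the point is that `C(A, ι)` is large enough to force `d = 0`. With `e i j = ι(u i j)`, every
`w ∈ A` gives the amplification `∑ⱼ e j 0 * w * e 0 j`. Its partial sums are bounded by `‖w‖`
(by the C⋆-identity applied to `2 ^ k`-th powers), and `∑_{j<n} e j j → 1` strictly by
nondegeneracy, so they converge strictly to an element of `C(A, ι)`. Hence
`d · e p 0 · A · e 0 0 = 0`, which forces `d · e p q = 0`, then `d · ι(K) = 0`, and finally
`d = 0`. -/

open Filter Topology Finset DoubleCentralizer
open scoped CStarAlgebra

theorem le_of_forall_pow_two_pow_le {x r C : ℝ} (hr : 0 ≤ r)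
    (h : ∀ k : ℕ, x ^ 2 ^ k ≤ C * r ^ 2 ^ k) : x ≤ r := by
  by_contra! hrx
  have hx : 0 < x := hr.trans_lt hrx
  have hlim : Tendsto (fun k : ℕ => C * (r / x) ^ 2 ^ k) atTop (𝓝 0) := by
    have hpow := tendsto_pow_atTop_atTop_of_one_lt (α := ℕ) one_lt_two
    simpa using ((tendsto_pow_atTop_nhds_zero_of_lt_one (div_nonneg hr hx.le)
      ((div_lt_one hx).2 hrx)).comp hpow).const_mul C
  obtain ⟨k, hk⟩ := (hlim.eventually (gt_mem_nhds one_pos)).exists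
  rw [div_pow, mul_div_assoc', div_lt_one (by positivity)] at hk
  linarith [h k]

namespace CStarRing

variable {E : Type*} [NonUnitalNormedRing E] [StarRing E] [CStarRing E] {z : E}

theorem eq_zero_of_forall_mul_left_eq_zero (h : ∀ y, y * z = 0) : z = 0 :=
  (star_mul_self_eq_zero_iff z).mp (h _)

theorem eq_zero_of_forall_mul_right_eq_zero (h : ∀ y, z * y = 0) : z = 0 :=
  star_eq_zero.mp <| (star_mul_self_eq_zero_iff _).mp <| by rw [star_star]; exact h _

theorem eq_zero_of_mul_star_mul_self_eq_zero (h : z * star z * z = 0) : z = 0 := by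
  have : star (star z * z) * (star z * z) = 0 := by
    rw [star_mul, star_star, mul_assoc, ← mul_assoc z, h, mul_zero]
  exact (star_mul_self_eq_zero_iff z).mp ((star_mul_self_eq_zero_iff _).mp this)

end CStarRing

section Approximation

variable (𝕜 : Type*) {M : Type*} [NontriviallyNormedField 𝕜] [NonUnitalNormedRing M]
  [NormedSpace 𝕜 M] [IsScalarTower 𝕜 M M] [SMulCommClass 𝕜 M M]

def tendstoMulSubmodule (g : ℕ → M) : Submodule 𝕜 M where
  carrier := {x | Tendsto (fun n => g n * x) atTop (𝓝 x)}
  add_mem' hx hy := by simpa only [Set.mem_ofPred_eq, mul_add] using hx.add hy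
  zero_mem' := by simp
  smul_mem' c x hx := by simpa only [Set.mem_ofPred_eq, mul_smul_comm] using hx.const_smul c

variable {𝕜}

theorem isClosed_tendstoMulSubmodule {g : ℕ → M} {C : ℝ} (hg : ∀ n, ‖g n‖ ≤ C) :
    IsClosed (tendstoMulSubmodule 𝕜 g : Set M) := by
  have hbdd : ∃ C, ∀ n, ‖ContinuousLinearMap.mul 𝕜 M (g n)‖ ≤ C :=
    ⟨C, fun n => (ContinuousLinearMap.opNorm_mul_apply_le 𝕜 M (g n)).trans (hg n)⟩
  exact Equicontinuous.isClosed_setOfPred_tendsto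
    (((NormedSpace.equicontinuous_TFAE _).out 5 1).mp hbdd) continuous_id

end Approximation

theorem cauchySeq_mul_of_mul_eq {M : Type*} [NonUnitalNormedRing M] {s p : ℕ → M} {B : ℝ}
    (hs : ∀ n, ‖s n‖ ≤ B) (hsp : ∀ m n, m ≤ n → s n * p m = s m) {x : M}
    (hx : Tendsto (fun m => p m * x) atTop (𝓝 x)) : CauchySeq fun n => s n * x := by
  refine cauchySeq_of_le_tendsto_0 (fun N => 2 * B * ‖x - p N * x‖) (fun n m N hn hm => ?_) ?_
  · have hdiff : s n * x - s m * x = (s n - s m) * (x - p N * x) := by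
      rw [sub_mul, mul_sub, mul_sub, ← mul_assoc, ← mul_assoc, hsp N n hn, hsp N m hm]
      abel
    rw [dist_eq_norm, hdiff]
    exact (norm_mul_le _ _).trans (mul_le_mul_of_nonneg_right
      ((norm_sub_le _ _).trans (by linarith [hs n, hs m])) (norm_nonneg _))
  · simpa using ((tendsto_const_nhds (x := x)).sub hx).norm.const_mul (2 * B)

structure IsMatrixUnits {R : Type*} [Mul R] [Zero R] [Star R] (e : ℕ → ℕ → R) : Prop where
  mul_eq : ∀ i j k l, e i j * e k l = if j = k then e i l else 0
  star_eq : ∀ i j, star (e i j) = e j i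

theorem MatrixUnits.isMatrixUnits {K : Type*} [NonUnitalCStarAlgebra K] (mu : MatrixUnits K) :
    IsMatrixUnits mu.u :=
  ⟨mu.u_mul, mu.star_u⟩

section MatrixUnitAlgebra

variable {R : Type*} [NonUnitalRing R] [StarRing R]

def diagProj (e : ℕ → ℕ → R) (n : ℕ) : R := ∑ j ∈ range n, e j j

/-- The `n × n` amplification `diag(y₀, …, y₀)` of the corner `y₀ = e 0 0 * y * e 0 0`. -/
def amplify (e : ℕ → ℕ → R) (n : ℕ) (y : R) : R := ∑ j ∈ range n, e j 0 * y * e 0 j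

namespace IsMatrixUnits

variable {e : ℕ → ℕ → R} (he : IsMatrixUnits e)
include he

theorem map {S F : Type*} [NonUnitalRing S] [StarRing S] [FunLike F R S]
    [NonUnitalRingHomClass F R S] [StarHomClass F R S] (f : F) :
    IsMatrixUnits fun i j => f (e i j) where
  mul_eq i j k l := by rw [← map_mul, he.mul_eq]; split_ifs <;> simp
  star_eq i j := by rw [← map_star, he.star_eq]

theorem diagProj_mul (n i j : ℕ) : diagProj e n * e i j = if i < n then e i j else 0 := by
  simp only [diagProj, sum_mul, he.mul_eq, sum_ite_eq', mem_range]

theorem isStarProjection_diagProj (n : ℕ) : IsStarProjection (diagProj e n) where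
  isIdempotentElem := by
    rw [IsIdempotentElem]
    nth_rw 2 [diagProj]
    rw [mul_sum]
    exact sum_congr rfl fun j hj => by rw [he.diagProj_mul, if_pos (mem_range.mp hj)]
  isSelfAdjoint := by simp only [IsSelfAdjoint, diagProj, star_sum, he.star_eq]

theorem amplify_mul (n p q : ℕ) (y : R) :
    amplify e n y * e p q = if p < n then e p 0 * y * e 0 q else 0 := by
  simp only [amplify, sum_mul, mul_assoc, he.mul_eq, mul_ite, mul_zero, sum_ite_eq', mem_range]

theorem mul_amplify (n p q : ℕ) (y : R) :
    e p q * amplify e n y = if q < n then e p 0 * y * e 0 q else 0 := by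
  simp only [amplify, mul_sum, ← mul_assoc, he.mul_eq, ite_mul, zero_mul, sum_ite_eq, mem_range]

theorem amplify_mul_diagProj {m n : ℕ} (h : m ≤ n) (y : R) :
    amplify e n y * diagProj e m = amplify e m y := by
  rw [diagProj, mul_sum]
  nth_rw 2 [amplify]
  exact sum_congr rfl fun j hj => by
    rw [he.amplify_mul, if_pos ((mem_range.mp hj).trans_le h)]

theorem amplify_mul_amplify (n : ℕ) (y z : R) :
    amplify e n y * amplify e n z = amplify e n (y * e 0 0 * z) := by
  conv_rhs => rw [amplify]
  conv_lhs => arg 2; rw [amplify]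
  rw [mul_sum]
  refine sum_congr rfl fun j hj => ?_
  rw [← mul_assoc, ← mul_assoc, he.amplify_mul, if_pos (mem_range.mp hj)]
  simp only [mul_assoc]

theorem star_amplify (n : ℕ) (y : R) : star (amplify e n y) = amplify e n (star y) := by
  simp only [amplify, star_sum, star_mul, he.star_eq, mul_assoc]

end IsMatrixUnits

end MatrixUnitAlgebra

namespace IsMatrixUnits

variable {R : Type*} [NonUnitalNormedRing R] [StarRing R] [CStarRing R]
variable {e : ℕ → ℕ → R} (he : IsMatrixUnits e)
include he

theorem norm_le_one (i j : ℕ) : ‖e i j‖ ≤ 1 := by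
  have hjj : IsStarProjection (e j j) :=
    ⟨by simp [IsIdempotentElem, he.mul_eq], he.star_eq j j⟩
  have : ‖e i j‖ * ‖e i j‖ ≤ 1 := by
    rw [← CStarRing.norm_star_mul_self, he.star_eq, he.mul_eq, if_pos rfl]
    exact hjj.norm_le
  nlinarith [norm_nonneg (e i j)]

theorem norm_amplify_le_mul (n : ℕ) (y : R) : ‖amplify e n y‖ ≤ n * ‖y‖ :=
  calc ‖amplify e n y‖ ≤ ∑ j ∈ range n, ‖e j 0 * y * e 0 j‖ := norm_sum_le _ _
    _ ≤ ∑ j ∈ range n, 1 * ‖y‖ * 1 := sum_le_sum fun j _ =>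
        norm_mul₃_le.trans (by gcongr <;> exact he.norm_le_one _ _)
    _ = n * ‖y‖ := by simp

theorem norm_amplify_pow_le (n k : ℕ) (y : R) : ‖amplify e n y‖ ^ 2 ^ k ≤ n * ‖y‖ ^ 2 ^ k := by
  induction k generalizing y with
  | zero => simpa using he.norm_amplify_le_mul n y
  | succ k ih =>
    have hsq : ‖amplify e n y‖ ^ 2 = ‖amplify e n (star y * e 0 0 * y)‖ := by
      rw [sq, ← CStarRing.norm_star_mul_self, he.star_amplify, he.amplify_mul_amplify]
    have hcorner : ‖star y * e 0 0 * y‖ ≤ ‖y‖ ^ 2 :=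
      norm_mul₃_le.trans (by rw [norm_star, sq]; nlinarith [he.norm_le_one 0 0, norm_nonneg y])
    rw [pow_succ', pow_mul, pow_mul, hsq]
    exact (ih _).trans (by gcongr)

theorem norm_amplify_le (n : ℕ) (y : R) : ‖amplify e n y‖ ≤ ‖y‖ :=
  le_of_forall_pow_two_pow_le (norm_nonneg y) (he.norm_amplify_pow_le n · y)

end IsMatrixUnits

namespace DoubleCentralizer

variable {A : Type*} [NonUnitalCStarAlgebra A]

theorem fst_mul (m : 𝓜(ℂ, A)) (b x : A) : m.fst (b * x) = m.fst b * x :=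
  sub_eq_zero.mp <| CStarRing.eq_zero_of_forall_mul_left_eq_zero fun y => by
    rw [mul_sub, ← m.central, ← mul_assoc y, ← m.central, mul_assoc, sub_self]

theorem snd_mul (m : 𝓜(ℂ, A)) (x b : A) : m.snd (x * b) = x * m.snd b :=
  sub_eq_zero.mp <| CStarRing.eq_zero_of_forall_mul_right_eq_zero fun y => by
    rw [sub_mul, m.central, mul_assoc, ← m.central, ← mul_assoc, sub_self]

theorem mul_coe_eq_coe_fst (m : 𝓜(ℂ, A)) (b : A) : m * (b : 𝓜(ℂ, A)) = ↑(m.fst b) := by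
  refine DoubleCentralizer.ext _ _ _ _ (Prod.ext ?_ ?_) <;> ext x
  · exact m.fst_mul b x
  · exact m.central x b

theorem coe_mul_eq_coe_snd (b : A) (m : 𝓜(ℂ, A)) : (b : 𝓜(ℂ, A)) * m = ↑(m.snd b) := by
  refine DoubleCentralizer.ext _ _ _ _ (Prod.ext ?_ ?_) <;> ext x
  · exact (m.central b x).symm
  · exact m.snd_mul x b

theorem norm_coe (a : A) : ‖(a : 𝓜(ℂ, A))‖ = ‖a‖ := by
  rw [← norm_fst, coe_fst, ContinuousLinearMap.opNorm_mul_apply]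

theorem isometry_coe : Isometry ((↑) : A → 𝓜(ℂ, A)) :=
  AddMonoidHomClass.isometry_of_norm (coeHom (𝕜 := ℂ) (A := A)) norm_coe

theorem ext_mul_coe {m m' : 𝓜(ℂ, A)} (h : ∀ x : A, m * x = m' * x) : m = m' := by
  have hfst : m.fst = m'.fst :=
    ContinuousLinearMap.ext fun x => isometry_coe.injective <| by
      rw [← mul_coe_eq_coe_fst, ← mul_coe_eq_coe_fst, h]
  refine DoubleCentralizer.ext _ _ _ _ (Prod.ext hfst ?_)
  ext x
  exact sub_eq_zero.mp <| CStarRing.eq_zero_of_forall_mul_right_eq_zero fun y => by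
    rw [sub_mul, m.central, m'.central, hfst, sub_self]

theorem mul_eq_zero_of_forall_mul_coe_mul {m t : 𝓜(ℂ, A)} (h : ∀ w : A, m * w * t = 0) :
    m * t = 0 := by
  refine ext_mul_coe fun x => ?_
  set v := t.fst x
  have hv : t * x = v := mul_coe_eq_coe_fst t x
  have hw : (((star m * m).snd (v * star v) : A) : 𝓜(ℂ, A)) =
      v * star (v : 𝓜(ℂ, A)) * (star m * m) := by
    rw [← coe_mul_eq_coe_snd]
    exact congrArg (· * (star m * m)) <|
      (map_mul (coeHom (𝕜 := ℂ) (A := A)) v (star v)).trans (congrArg _ (map_star coeHom v))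
  rw [zero_mul, mul_assoc, hv]
  -- `s = m v` satisfies `s s⋆ s = m w v` with `w = v v⋆ m⋆ m ∈ A`.
  apply CStarRing.eq_zero_of_mul_star_mul_self_eq_zero
  calc m * v * star (m * v) * (m * v)
        = m * (v * star (v : 𝓜(ℂ, A)) * (star m * m)) * (t * x) := by
        rw [hv, star_mul]; simp only [mul_assoc]
    _ = m * ↑((star m * m).snd (v * star v)) * t * x := by rw [hw]; simp only [mul_assoc]
    _ = 0 := by rw [h, zero_mul]

theorem exists_tendsto_of_cauchySeq {m : ℕ → 𝓜(ℂ, A)}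
    (hl : ∀ x : A, CauchySeq fun n => m n * (x : 𝓜(ℂ, A)))
    (hr : ∀ x : A, CauchySeq fun n => (x : 𝓜(ℂ, A)) * m n) :
    ∃ m' : 𝓜(ℂ, A), ∀ x : A, Tendsto (fun n => m n * (x : 𝓜(ℂ, A))) atTop (𝓝 (m' * x)) ∧
      Tendsto (fun n => (x : 𝓜(ℂ, A)) * m n) atTop (𝓝 (x * m')) := by
  have hcoe := isometry_coe (A := A)
  have hL (x : A) : ∃ l, Tendsto (fun n => (m n).fst x) atTop (𝓝 l) :=
    cauchySeq_tendsto_of_complete <| hcoe.isUniformInducing.cauchy_map_iff.mp <| by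
      simpa only [CauchySeq, Filter.map_map, Function.comp_def, mul_coe_eq_coe_fst] using hl x
  have hR (x : A) : ∃ r, Tendsto (fun n => (m n).snd x) atTop (𝓝 r) :=
    cauchySeq_tendsto_of_complete <| hcoe.isUniformInducing.cauchy_map_iff.mp <| by
      simpa only [CauchySeq, Filter.map_map, Function.comp_def, coe_mul_eq_coe_snd] using hr x
  choose L hL using hL
  choose R hR using hR
  let m' : 𝓜(ℂ, A) :=
    { fst := continuousLinearMapOfTendsto (fun n => (m n).fst) (tendsto_pi_nhds.mpr hL)
      snd := continuousLinearMapOfTendsto (fun n => (m n).snd) (tendsto_pi_nhds.mpr hR)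
      central x y := tendsto_nhds_unique ((hR x).mul_const y) (by
        simpa only [(m _).central] using (hL y).const_mul x : Tendsto _ _ (𝓝 (x * L y))) }
  refine ⟨m', fun x => ⟨?_, ?_⟩⟩
  · simp only [mul_coe_eq_coe_fst]
    exact (hcoe.continuous.tendsto _).comp (hL x)
  · simp only [coe_mul_eq_coe_snd]
    exact (hcoe.continuous.tendsto _).comp (hR x)

end DoubleCentralizer

namespace IsMatrixUnits

variable {A : Type*} [NonUnitalCStarAlgebra A] {e : ℕ → ℕ → 𝓜(ℂ, A)} (he : IsMatrixUnits e)
include he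

theorem exists_amplification
    (hP : ∀ x : A, Tendsto (fun n => diagProj e n * (x : 𝓜(ℂ, A))) atTop (𝓝 x))
    (y : 𝓜(ℂ, A)) :
    ∃ c : 𝓜(ℂ, A), ∀ p q, c * e p q = e p 0 * y * e 0 q ∧ e p q * c = e p 0 * y * e 0 q := by
  have hl (z : 𝓜(ℂ, A)) (x : A) : CauchySeq fun n => amplify e n z * (x : 𝓜(ℂ, A)) :=
    cauchySeq_mul_of_mul_eq (he.norm_amplify_le · z) (fun _ _ h => he.amplify_mul_diagProj h z)
      (hP x)
  have hr (x : A) : CauchySeq fun n => (x : 𝓜(ℂ, A)) * amplify e n y := by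
    have hstar : ((star x : A) : 𝓜(ℂ, A)) = star (x : 𝓜(ℂ, A)) := map_star (coeHom (𝕜 := ℂ)) x
    simpa only [Function.comp_def, hstar, star_mul, star_star, he.star_amplify] using
      star_isometry.uniformContinuous.comp_cauchySeq (hl (star y) (star x))
  obtain ⟨c, hc⟩ := exists_tendsto_of_cauchySeq (hl y) hr
  refine ⟨c, fun p q => ⟨ext_mul_coe fun x => ?_, ext_mul_coe fun x => ?_⟩⟩
  · have hx : e p q * x = ↑((e p q).fst x) := mul_coe_eq_coe_fst _ _
    rw [mul_assoc, hx]
    refine tendsto_nhds_unique ((hc _).1) (tendsto_const_nhds.congr' ?_)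
    filter_upwards [eventually_gt_atTop p] with n hn
    rw [← hx, ← mul_assoc, he.amplify_mul, if_pos hn, mul_assoc]
  · rw [mul_assoc]
    refine tendsto_nhds_unique (((hc x).1).const_mul (e p q)) (tendsto_const_nhds.congr' ?_)
    filter_upwards [eventually_gt_atTop q] with n hn
    rw [← mul_assoc, he.mul_amplify, if_pos hn]

end IsMatrixUnits

def NonUnitalStarAlgHom.toContinuousLinearMap {K B : Type*} [NonUnitalCStarAlgebra K]
    [NonUnitalCStarAlgebra B] (φ : K →⋆ₙₐ[ℂ] B) : K →L[ℂ] B :=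
  ⟨φ, map_continuous φ⟩

@[simp]
theorem NonUnitalStarAlgHom.toContinuousLinearMap_apply {K B : Type*} [NonUnitalCStarAlgebra K]
    [NonUnitalCStarAlgebra B] (φ : K →⋆ₙₐ[ℂ] B) (k : K) : φ.toContinuousLinearMap k = φ k :=
  rfl

theorem MatrixUnits.apply_mem_of_forall {K E : Type*} [NonUnitalCStarAlgebra K] [AddCommGroup E]
    [Module ℂ E] [TopologicalSpace E] (mu : MatrixUnits K) (f : K →L[ℂ] E) {S : Submodule ℂ E}
    (hS : IsClosed (S : Set E)) (h : ∀ i j, f (mu.u i j) ∈ S) (k : K) : f k ∈ S := by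
  have hspan : Submodule.span ℂ (Set.range fun p : ℕ × ℕ => mu.u p.1 p.2) ≤
      S.comap (f : K →ₗ[ℂ] E) :=
    Submodule.span_le.mpr (Set.range_subset_iff.mpr fun p => h p.1 p.2)
  exact closure_minimal hspan (hS.preimage f.continuous) (mu.dense_span.closure_eq ▸ Set.mem_univ k)

theorem Nondegenerate.eq_zero_of_forall_mul_eq_zero {B A : Type*} [NonUnitalCStarAlgebra B]
    [NonUnitalCStarAlgebra A] {φ : B →⋆ₙₐ[ℂ] 𝓜(ℂ, A)} (hφ : Nondegenerate φ) {m : 𝓜(ℂ, A)}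
    (h : ∀ b, m * φ b = 0) : m = 0 := by
  refine ext_mul_coe fun x => ?_
  have hspan : Submodule.span ℂ {x : 𝓜(ℂ, A) | ∃ (b : B) (c : A), x = φ b * c} ≤
      LinearMap.ker (ContinuousLinearMap.mul ℂ 𝓜(ℂ, A) m).toLinearMap := by
    refine Submodule.span_le.mpr ?_
    rintro _ ⟨b, c, rfl⟩
    simp [← mul_assoc, h]
  rw [zero_mul]
  exact closure_minimal hspan (ContinuousLinearMap.isClosed_ker _) (hφ x)

section RelativeCommutant

variable {K A : Type*} [NonUnitalCStarAlgebra K] [NonUnitalCStarAlgebra A]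
  {ι : K →⋆ₙₐ[ℂ] 𝓜(ℂ, A)}

theorem tendsto_diagProj_mul_coe (mu : MatrixUnits K) (hι : Nondegenerate ι) (x : A) :
    Tendsto (fun n => diagProj (fun i j => ι (mu.u i j)) n * (x : 𝓜(ℂ, A))) atTop (𝓝 x) := by
  have he := mu.isMatrixUnits.map ι
  have hT := isClosed_tendstoMulSubmodule (𝕜 := ℂ) fun n => (he.isStarProjection_diagProj n).norm_le
  have hgen (k : K) (c : A) :
      ι k * (c : 𝓜(ℂ, A)) ∈ tendstoMulSubmodule ℂ (diagProj fun i j => ι (mu.u i j)) := by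
    have hunit (i j : ℕ) : ι (mu.u i j) * (c : 𝓜(ℂ, A)) ∈
        tendstoMulSubmodule ℂ (diagProj fun i j => ι (mu.u i j)) := by
      refine tendsto_const_nhds.congr' ?_
      filter_upwards [eventually_gt_atTop i] with n hn
      simp [← mul_assoc, he.diagProj_mul, hn]
    simpa using mu.apply_mem_of_forall
      ((ContinuousLinearMap.mul ℂ 𝓜(ℂ, A)).flip (c : 𝓜(ℂ, A)) ∘L ι.toContinuousLinearMap) hT
      (by simpa using hunit) k
  refine closure_minimal (Submodule.span_le.mpr ?_) hT (hι x)
  rintro _ ⟨k, c, rfl⟩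
  exact hgen k c

theorem exists_mem_relComm_mul_eq (mu : MatrixUnits K) (hι : Nondegenerate ι) (w : A) :
    ∃ c ∈ relComm ι, ∀ p q, c * ι (mu.u p q) = ι (mu.u p 0) * w * ι (mu.u 0 q) := by
  have he := mu.isMatrixUnits.map ι
  obtain ⟨c, hc⟩ := he.exists_amplification (tendsto_diagProj_mul_coe mu hι) w
  have hcomm : (ContinuousLinearMap.mul ℂ _).flip c ∘L ι.toContinuousLinearMap =
      ContinuousLinearMap.mul ℂ _ c ∘L ι.toContinuousLinearMap := by
    refine ContinuousLinearMap.ext_on mu.dense_span ?_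
    rintro _ ⟨⟨i, j⟩, rfl⟩
    exact (hc i j).2.trans (hc i j).1.symm
  have hrange : IsClosed
      (LinearMap.range (coeHom (𝕜 := ℂ) (A := A) : A →ₗ[ℂ] 𝓜(ℂ, A)) : Set 𝓜(ℂ, A)) := by
    rw [LinearMap.coe_range]
    exact isometry_coe.isClosedEmbedding.isClosed_range
  refine ⟨c, fun k => ⟨DFunLike.congr_fun hcomm k, ?_⟩, fun p q => (hc p q).1⟩
  refine mu.apply_mem_of_forall (ContinuousLinearMap.mul ℂ _ c ∘L ι.toContinuousLinearMap) hrange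
    (fun i j => ?_) k
  exact ⟨(ι (mu.u 0 j)).snd ((ι (mu.u i 0)).fst w), by
    simp [(hc i j).1, mul_coe_eq_coe_fst, coe_mul_eq_coe_snd]⟩

theorem eq_zero_of_forall_mul_relComm_eq_zero (mu : MatrixUnits K) (hι : Nondegenerate ι)
    {d : 𝓜(ℂ, A)} (hd : ∀ c ∈ relComm ι, d * c = 0) : d = 0 := by
  have hcol (p : ℕ) : d * ι (mu.u p 0) * ι (mu.u 0 0) = 0 :=
    mul_eq_zero_of_forall_mul_coe_mul fun w => by
      obtain ⟨c, hc, hce⟩ := exists_mem_relComm_mul_eq mu hι w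
      calc d * ι (mu.u p 0) * w * ι (mu.u 0 0) = d * c * ι (mu.u p 0) := by
            rw [mul_assoc d c, hce]; simp only [mul_assoc]
        _ = 0 := by rw [hd c hc, zero_mul]
  have hvanish : (ContinuousLinearMap.mul ℂ _ d ∘L ι.toContinuousLinearMap) = 0 := by
    refine ContinuousLinearMap.ext_on mu.dense_span ?_
    rintro _ ⟨⟨p, q⟩, rfl⟩
    have hpq : mu.u p q = mu.u p 0 * mu.u 0 0 * mu.u 0 q := by simp [mu.u_mul]
    simp [hpq, ← mul_assoc, hcol]
  exact hι.eq_zero_of_forall_mul_eq_zero (DFunLike.congr_fun hvanish)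

theorem mul_mem_relComm_of_commute {a c : 𝓜(ℂ, A)} (ha : ∀ k, ι k * a = a * ι k)
    (hc : c ∈ relComm ι) : a * c ∈ relComm ι := fun k => by
  obtain ⟨hck, w, hw⟩ := hc k
  refine ⟨by rw [← mul_assoc, ha k, mul_assoc, hck, ← mul_assoc], a.fst w, ?_⟩
  rw [mul_assoc, ← hw, mul_coe_eq_coe_fst]

theorem mul_mem_relComm_of_commute' {a c : 𝓜(ℂ, A)} (ha : ∀ k, ι k * a = a * ι k)
    (hc : c ∈ relComm ι) : c * a ∈ relComm ι := fun k => by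
  obtain ⟨hck, w, hw⟩ := hc k
  refine ⟨by rw [← mul_assoc, hck, mul_assoc, ha k, ← mul_assoc], a.snd w, ?_⟩
  rw [mul_assoc, ← ha k, ← mul_assoc, ← hw, coe_mul_eq_coe_snd]

end RelativeCommutant

/-- Since `C(A, ι)` is a nondegenerate C⋆-subalgebra of `M(A)`, the canonical copy of
`M(C(A, ι))` inside `M(A)` is the idealizer of `C(A, ι)`, which is the left-hand side here. -/
theorem multiplier_relComm_eq_commutant
    {K A : Type*} [NonUnitalCStarAlgebra K] [NonUnitalCStarAlgebra A]
    (hK : IsCompactOperatorsAlgebra K)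
    (ι : K →⋆ₙₐ[ℂ] 𝓜(ℂ, A)) (hι : Nondegenerate ι) :
    {a : 𝓜(ℂ, A) | ∀ c ∈ relComm ι, a * c ∈ relComm ι ∧ c * a ∈ relComm ι} =
      {a : 𝓜(ℂ, A) | ∀ k : K, ι k * a = a * ι k} := by
  obtain ⟨mu⟩ := hK
  ext a
  refine ⟨fun h k => ?_, fun ha c hc => ⟨mul_mem_relComm_of_commute ha hc,
    mul_mem_relComm_of_commute' ha hc⟩⟩
  refine sub_eq_zero.mp (eq_zero_of_forall_mul_relComm_eq_zero mu hι fun c hc => ?_)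
  calc (ι k * a - a * ι k) * c = ι k * (a * c) - a * (ι k * c) := by noncomm_ring
    _ = 0 := by rw [((h c hc).1 k).1, (hc k).1, mul_assoc, sub_self]
end
end

section
/- For any C*-algebra B, the multiplier algebra of the relative commutant C(B ⊗ 𝒦, 1 ⊗ id) is M(B) ⊗ 1_𝒦, viewed as a subalgebra of M(B ⊗ 𝒦). -/
open scoped MultiplierAlgebra

noncomputable section

open DoubleCentralizer Filter Topology

set_option maxHeartbeats 1000000
set_option synthInstance.maxHeartbeats 400000

namespace MStmt

section Basics
variable {A : Type*} [NonUnitalCStarAlgebra A]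

lemma eq_zero_of_mul_right (d : A) (h : ∀ b : A, d * b = 0) : d = 0 := by
  have h1 : ‖d‖ * ‖d‖ = 0 := by
    rw [← CStarRing.norm_self_mul_star, h (star d), norm_zero]
  have := mul_self_eq_zero.mp h1
  simpa using norm_eq_zero.mp this

lemma eq_zero_of_mul_left (d : A) (h : ∀ b : A, b * d = 0) : d = 0 := by
  have h1 : ‖d‖ * ‖d‖ = 0 := by
    rw [← CStarRing.norm_star_mul_self, h (star d), norm_zero]
  have := mul_self_eq_zero.mp h1
  simpa using norm_eq_zero.mp this

lemma mcoe_injective : Function.Injective ((↑) : A → 𝓜(ℂ, A)) := by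
  intro a b hab
  have h : ∀ c : A, a * c = b * c := fun c => by
    have := congrArg (fun x : 𝓜(ℂ, A) => x.fst c) hab
    simpa using this
  have : ∀ c : A, (a - b) * c = 0 := fun c => by rw [sub_mul, h c, sub_self]
  exact sub_eq_zero.mp (eq_zero_of_mul_right _ this)

lemma fst_mul_right (x : 𝓜(ℂ, A)) (a b : A) : x.fst (a * b) = x.fst a * b := by
  have key : ∀ c : A, c * x.fst (a * b) = c * (x.fst a * b) := fun c => by
    rw [← x.central c (a * b), ← mul_assoc, ← mul_assoc, x.central c a]
  have : ∀ c : A, c * (x.fst (a * b) - x.fst a * b) = 0 := fun c => by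
    rw [mul_sub, key c, sub_self]
  have := eq_zero_of_mul_left _ this
  exact sub_eq_zero.mp this

lemma snd_mul_left (x : 𝓜(ℂ, A)) (a b : A) : x.snd (a * b) = a * x.snd b := by
  have key : ∀ c : A, x.snd (a * b) * c = (a * x.snd b) * c := fun c => by
    rw [x.central (a * b) c, mul_assoc, mul_assoc, ← x.central b c]
  have : ∀ c : A, (x.snd (a * b) - a * x.snd b) * c = 0 := fun c => by
    rw [sub_mul, key c, sub_self]
  exact sub_eq_zero.mp (eq_zero_of_mul_right _ this)

lemma mul_mcoe (x : 𝓜(ℂ, A)) (a : A) : x * (a : 𝓜(ℂ, A)) = ((x.fst a : A) : 𝓜(ℂ, A)) := by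
  refine DoubleCentralizer.ext ℂ A _ _ (Prod.ext ?_ ?_)
  · ext b
    simpa using fst_mul_right x a b
  · ext b
    simpa using x.central b a

lemma mcoe_mul (a : A) (x : 𝓜(ℂ, A)) : (a : 𝓜(ℂ, A)) * x = ((x.snd a : A) : 𝓜(ℂ, A)) := by
  refine DoubleCentralizer.ext ℂ A _ _ (Prod.ext ?_ ?_)
  · ext b
    simpa using (x.central a b).symm
  · ext b
    simpa using snd_mul_left x b a

lemma mcoe_ext {x y : 𝓜(ℂ, A)} (h : ∀ a : A, x * (a : 𝓜(ℂ, A)) = y * (a : 𝓜(ℂ, A))) :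
    x = y := by
  refine DoubleCentralizer.ext ℂ A _ _ (Prod.ext ?_ ?_)
  · ext a
    have := h a
    rw [mul_mcoe, mul_mcoe] at this
    exact mcoe_injective this
  · ext a
    have key : ∀ b : A, (x.snd a - y.snd a) * b = 0 := fun b => by
      have hb := h b
      rw [mul_mcoe, mul_mcoe] at hb
      have hb' : x.fst b = y.fst b := mcoe_injective hb
      rw [sub_mul, x.central a b, y.central a b, hb', sub_self]
    simpa using sub_eq_zero.mp (eq_zero_of_mul_right _ key)

lemma norm_mcoe (a : A) : ‖(a : 𝓜(ℂ, A))‖ = ‖a‖ := by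
  rw [← DoubleCentralizer.norm_fst, DoubleCentralizer.coe_fst]
  exact ContinuousLinearMap.opNorm_mul_apply ℂ A a

lemma isometry_mcoe : Isometry ((↑) : A → 𝓜(ℂ, A)) :=
  AddMonoidHomClass.isometry_of_norm (DoubleCentralizer.coeHom : A →⋆ₙₐ[ℂ] 𝓜(ℂ, A)) norm_mcoe

lemma isClosed_range_mcoe : IsClosed (Set.range ((↑) : A → 𝓜(ℂ, A))) :=
  (isometry_mcoe.isClosedEmbedding).isClosed_range

lemma mcoe_add (a b : A) : ((a + b : A) : 𝓜(ℂ, A)) = (a : 𝓜(ℂ, A)) + b :=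
  map_add (DoubleCentralizer.coeHom : A →⋆ₙₐ[ℂ] 𝓜(ℂ, A)) a b

lemma mcoe_smul (c : ℂ) (a : A) : ((c • a : A) : 𝓜(ℂ, A)) = c • (a : 𝓜(ℂ, A)) :=
  map_smul (DoubleCentralizer.coeHom : A →⋆ₙₐ[ℂ] 𝓜(ℂ, A)) c a

lemma mcoe_zero : ((0 : A) : 𝓜(ℂ, A)) = 0 :=
  map_zero (DoubleCentralizer.coeHom : A →⋆ₙₐ[ℂ] 𝓜(ℂ, A))

lemma mcoe_mul_mcoe (a b : A) : ((a * b : A) : 𝓜(ℂ, A)) = (a : 𝓜(ℂ, A)) * b :=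
  map_mul (DoubleCentralizer.coeHom : A →⋆ₙₐ[ℂ] 𝓜(ℂ, A)) a b

end Basics

section MatrixUnitsSection
variable {K : Type*} [NonUnitalCStarAlgebra K] (mu : MatrixUnits K)

lemma norm_u (i j : ℕ) : ‖mu.u i j‖ = 1 := by
  have hjj : ‖mu.u j j‖ = 1 := by
    have h1 : ‖mu.u j j‖ * ‖mu.u j j‖ = ‖mu.u j j‖ := by
      rw [← CStarRing.norm_star_mul_self, mu.star_u, mu.u_mul]
      simp
    have h2 : ‖mu.u j j‖ ≠ 0 := norm_ne_zero_iff.mpr (mu.u_ne_zero j j)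
    field_simp at h1
    tauto
  have h1 : ‖mu.u i j‖ * ‖mu.u i j‖ = 1 := by
    rw [← CStarRing.norm_star_mul_self, mu.star_u, mu.u_mul]
    simpa using hjj
  nlinarith [norm_nonneg (mu.u i j)]

/-- partial sums of diagonal matrix units -/
def P (n : ℕ) : K := ∑ i ∈ Finset.range n, mu.u i i

lemma star_P (n : ℕ) : star (P mu n) = P mu n := by
  simp [MStmt.P, star_sum, mu.star_u]

lemma P_mul_u (n i j : ℕ) (h : i < n) : P mu n * mu.u i j = mu.u i j := by
  rw [MStmt.P, Finset.sum_mul]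
  rw [Finset.sum_eq_single i]
  · rw [mu.u_mul]; simp
  · intro l _ hl
    rw [mu.u_mul]; simp [hl]
  · intro hi; exact absurd (Finset.mem_range.mpr h) hi

lemma u_mul_P (n i j : ℕ) (h : j < n) : mu.u i j * P mu n = mu.u i j := by
  rw [MStmt.P, Finset.mul_sum]
  rw [Finset.sum_eq_single j]
  · rw [mu.u_mul]; simp
  · intro l _ hl
    rw [mu.u_mul]; simp [Ne.symm hl]
  · intro hj; exact absurd (Finset.mem_range.mpr h) hj

lemma P_mul_P (n : ℕ) : P mu n * P mu n = P mu n := by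
  rw [MStmt.P, Finset.mul_sum]
  refine Finset.sum_congr rfl fun i hi => ?_
  exact P_mul_u mu n i i (Finset.mem_range.mp hi)

lemma norm_P_le (n : ℕ) : ‖P mu n‖ ≤ 1 := by
  have h1 : ‖P mu n‖ * ‖P mu n‖ = ‖P mu n‖ := by
    rw [← CStarRing.norm_star_mul_self, star_P mu, P_mul_P mu]
  nlinarith [norm_nonneg (P mu n)]

/-- eventually `P n * k = k` for `k` in the span of matrix units -/
lemma eventually_P_mul (k : K)
    (hk : k ∈ Submodule.span ℂ (Set.range fun p : ℕ × ℕ => mu.u p.1 p.2)) :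
    (∀ᶠ n in atTop, P mu n * k = k) ∧ (∀ᶠ n in atTop, k * P mu n = k) := by
  induction hk using Submodule.span_induction with
  | mem x hx =>
    obtain ⟨⟨i, j⟩, rfl⟩ := hx
    constructor
    · filter_upwards [eventually_ge_atTop (i + 1)] with n hn
      exact P_mul_u mu n i j (by omega)
    · filter_upwards [eventually_ge_atTop (j + 1)] with n hn
      exact u_mul_P mu n i j (by omega)
  | zero => simp
  | add x y _ _ hx hy =>
    constructor
    · filter_upwards [hx.1, hy.1] with n h1 h2
      rw [mul_add, h1, h2]
    · filter_upwards [hx.2, hy.2] with n h1 h2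
      rw [add_mul, h1, h2]
  | smul c x _ hx =>
    constructor
    · filter_upwards [hx.1] with n h1
      rw [mul_smul_comm, h1]
    · filter_upwards [hx.2] with n h1
      rw [smul_mul_assoc, h1]

/- Generic density lemmas -/

lemma tendsto_of_dense {X Y : Type*} [PseudoMetricSpace X] [PseudoMetricSpace Y]
    {F : ℕ → X → Y} {G : X → Y} {C : ℝ} (hC : 0 ≤ C)
    (hF : ∀ n x x', dist (F n x) (F n x') ≤ C * dist x x')
    (hG : ∀ x x', dist (G x) (G x') ≤ C * dist x x')
    {S : Set X} (hS : Dense S)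
    (h : ∀ s ∈ S, Tendsto (fun n => F n s) atTop (𝓝 (G s))) (x : X) :
    Tendsto (fun n => F n x) atTop (𝓝 (G x)) := by
  rw [Metric.tendsto_atTop]
  intro ε hε
  have hd : (0:ℝ) < ε / (3 * (C + 1)) := by positivity
  obtain ⟨s, hs1, hs2⟩ := Metric.dense_iff.mp hS x _ hd
  have hCd : C * dist x s < ε / 3 := by
    have h1 : dist x s < ε / (3 * (C + 1)) := by
      rw [Metric.mem_ball] at hs1; rw [dist_comm]; exact hs1
    have h2 : C * dist x s ≤ C * (ε / (3 * (C + 1))) :=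
      mul_le_mul_of_nonneg_left h1.le hC
    have h3 : C * (ε / (3 * (C + 1))) < ε / 3 := by
      have he : C * (ε / (3 * (C + 1))) = (C * ε) / (3 * (C + 1)) := by ring
      rw [he, div_lt_div_iff₀ (by linarith) (by norm_num)]
      nlinarith
    linarith
  obtain ⟨N, hN⟩ := (Metric.tendsto_atTop.mp (h s hs2) (ε/3) (by linarith))
  refine ⟨N, fun n hn => ?_⟩
  calc dist (F n x) (G x)
      ≤ dist (F n x) (F n s) + dist (F n s) (G s) + dist (G s) (G x) := dist_triangle4 _ _ _ _
    _ ≤ C * dist x s + dist (F n s) (G s) + C * dist s x := by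
        gcongr
        exacts [hF n x s, hG s x]
    _ < ε / 3 + ε / 3 + ε / 3 := by
        rw [dist_comm s x]
        have := hN n hn
        gcongr <;> linarith
    _ = ε := by ring

lemma cauchySeq_of_dense {X Y : Type*} [PseudoMetricSpace X] [PseudoMetricSpace Y]
    {F : ℕ → X → Y} {C : ℝ} (hC : 0 ≤ C)
    (hF : ∀ n x x', dist (F n x) (F n x') ≤ C * dist x x')
    {S : Set X} (hS : Dense S)
    (h : ∀ s ∈ S, CauchySeq fun n => F n s) (x : X) :
    CauchySeq fun n => F n x := by
  rw [Metric.cauchySeq_iff]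
  intro ε hε
  have hd : (0:ℝ) < ε / (3 * (C + 1)) := by positivity
  obtain ⟨s, hs1, hs2⟩ := Metric.dense_iff.mp hS x _ hd
  have hCd : C * dist x s < ε / 3 := by
    have h1 : dist x s < ε / (3 * (C + 1)) := by
      rw [Metric.mem_ball] at hs1; rw [dist_comm]; exact hs1
    have h3 : C * (ε / (3 * (C + 1))) < ε / 3 := by
      have he : C * (ε / (3 * (C + 1))) = (C * ε) / (3 * (C + 1)) := by ring
      rw [he, div_lt_div_iff₀ (by linarith) (by norm_num)]
      nlinarith
    nlinarith [mul_le_mul_of_nonneg_left h1.le hC]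
  obtain ⟨N, hN⟩ := Metric.cauchySeq_iff.mp (h s hs2) (ε/3) (by linarith)
  refine ⟨N, fun m hm n hn => ?_⟩
  calc dist (F m x) (F n x)
      ≤ dist (F m x) (F m s) + dist (F m s) (F n s) + dist (F n s) (F n x) :=
        dist_triangle4 _ _ _ _
    _ < ε / 3 + ε / 3 + ε / 3 := by
        have h1 := hF m x s
        have h2 := hF n s x
        rw [dist_comm s x] at h2
        have := hN m hm n hn
        gcongr <;> linarith
    _ = ε := by ring

/-- `P n` is an approximate identity: `P n * k → k` for every `k`. -/
lemma tendsto_P_mul (k : K) : Tendsto (fun n => P mu n * k) atTop (𝓝 k) := by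
  refine tendsto_of_dense (F := fun n x => P mu n * x) (G := id) (C := 1) zero_le_one
    (fun n x x' => ?_) (fun x x' => by simp [one_mul]) mu.dense_span (fun s hs => ?_) k
  · rw [dist_eq_norm, dist_eq_norm, ← mul_sub, one_mul]
    calc ‖P mu n * (x - x')‖ ≤ ‖P mu n‖ * ‖x - x'‖ := norm_mul_le _ _
      _ ≤ 1 * ‖x - x'‖ := by
          apply mul_le_mul_of_nonneg_right (norm_P_le mu n) (norm_nonneg _)
      _ = ‖x - x'‖ := one_mul _
  · refine Tendsto.congr' ?_ tendsto_const_nhds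
    filter_upwards [(eventually_P_mul mu s hs).1] with n h
    exact h.symm

lemma tendsto_mul_P (k : K) : Tendsto (fun n => k * P mu n) atTop (𝓝 k) := by
  refine tendsto_of_dense (F := fun n x => x * P mu n) (G := id) (C := 1) zero_le_one
    (fun n x x' => ?_) (fun x x' => by simp [one_mul]) mu.dense_span (fun s hs => ?_) k
  · rw [dist_eq_norm, dist_eq_norm, ← sub_mul, one_mul]
    calc ‖(x - x') * P mu n‖ ≤ ‖x - x'‖ * ‖P mu n‖ := norm_mul_le _ _
      _ ≤ ‖x - x'‖ * 1 := by
          apply mul_le_mul_of_nonneg_left (norm_P_le mu n) (norm_nonneg _)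
      _ = ‖x - x'‖ := mul_one _
  · refine Tendsto.congr' ?_ tendsto_const_nhds
    filter_upwards [(eventually_P_mul mu s hs).2] with n h
    exact h.symm

end MatrixUnitsSection

section TensorSection
variable {K B T : Type*} [NonUnitalCStarAlgebra K] [NonUnitalCStarAlgebra B]
  [NonUnitalCStarAlgebra T]

variable (τ : CStarTensor B K T)

lemma tmul_zero (b : B) : τ.tmul b 0 = 0 := by
  have := τ.tmul_smul 0 b 0
  simpa using this

lemma zero_tmul (k : K) : τ.tmul 0 k = 0 := by
  have := τ.smul_tmul 0 0 k
  simpa using this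

/-- `τ.tmul b` as a continuous linear map in the second variable. -/
def tmulR (b : B) : K →L[ℂ] T :=
  LinearMap.mkContinuous
    { toFun := τ.tmul b
      map_add' := τ.tmul_add b
      map_smul' := fun c k => τ.tmul_smul c b k }
    ‖b‖ (fun k => le_of_eq (τ.norm_tmul b k))

@[simp] lemma tmulR_apply (b : B) (k : K) : tmulR τ b k = τ.tmul b k := rfl

/-- `τ.tmul · k` as a continuous linear map in the first variable. -/
def tmulL (k : K) : B →L[ℂ] T :=
  LinearMap.mkContinuous
    { toFun := fun b => τ.tmul b k
      map_add' := fun b b' => τ.add_tmul b b' k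
      map_smul' := fun c b => τ.smul_tmul c b k }
    ‖k‖ (fun b => le_of_eq (by show ‖τ.tmul b k‖ = _; rw [τ.norm_tmul b k]; ring))

@[simp] lemma tmulL_apply (b : B) (k : K) : tmulL τ k b = τ.tmul b k := rfl

/-- density principle in `T` -/
lemma forall_mem_of_dense_T (S : Set T) (h1 : IsClosed S)
    (h2 : ∀ b k, τ.tmul b k ∈ S)
    (h3 : ∀ s t, s ∈ S → t ∈ S → s + t ∈ S)
    (h4 : ∀ (c : ℂ) t, t ∈ S → c • t ∈ S)
    (h5 : (0 : T) ∈ S) : ∀ t, t ∈ S := by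
  intro t
  have hspan : (Submodule.span ℂ {x : T | ∃ b k, x = τ.tmul b k} : Set T) ⊆ S := by
    intro y hy
    induction hy using Submodule.span_induction with
    | mem x hx => obtain ⟨b, k, rfl⟩ := hx; exact h2 b k
    | zero => exact h5
    | add x y _ _ hx hy => exact h3 x y hx hy
    | smul c x _ hx => exact h4 c x hx
  have := τ.dense_span.closure_eq
  have ht : t ∈ closure (Submodule.span ℂ {x : T | ∃ b k, x = τ.tmul b k} : Set T) := by
    rw [this]; trivial
  exact h1.closure_subset (closure_mono hspan ht)

/-- density principle in `K` -/
lemma forall_mem_of_dense_K {K' : Type*} [NonUnitalCStarAlgebra K'] (mu : MatrixUnits K')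
    (S : Set K') (h1 : IsClosed S)
    (h2 : ∀ i j, mu.u i j ∈ S)
    (h3 : ∀ s t, s ∈ S → t ∈ S → s + t ∈ S)
    (h4 : ∀ (c : ℂ) t, t ∈ S → c • t ∈ S)
    (h5 : (0 : K') ∈ S) : ∀ k, k ∈ S := by
  intro t
  have hspan : (Submodule.span ℂ (Set.range fun p : ℕ × ℕ => mu.u p.1 p.2) : Set K') ⊆ S := by
    intro y hy
    induction hy using Submodule.span_induction with
    | mem x hx => obtain ⟨⟨i, j⟩, rfl⟩ := hx; exact h2 i j
    | zero => exact h5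
    | add x y _ _ hx hy => exact h3 x y hx hy
    | smul c x _ hx => exact h4 c x hx
  have := mu.dense_span.closure_eq
  have ht : t ∈ closure (Submodule.span ℂ (Set.range fun p : ℕ × ℕ => mu.u p.1 p.2) : Set K') := by
    rw [this]; trivial
  exact h1.closure_subset (closure_mono hspan ht)

end TensorSection

section WSection
variable {K B T : Type*} [NonUnitalCStarAlgebra K] [NonUnitalCStarAlgebra B]
  [NonUnitalCStarAlgebra T]

variable (mu : MatrixUnits K) (τ : CStarTensor B K T)

lemma norm_tmulP_le (b : B) (n : ℕ) : ‖τ.tmul b (P mu n)‖ ≤ ‖b‖ := by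
  rw [τ.norm_tmul]
  calc ‖b‖ * ‖P mu n‖ ≤ ‖b‖ * 1 := by
        exact mul_le_mul_of_nonneg_left (norm_P_le mu n) (norm_nonneg _)
    _ = ‖b‖ := mul_one _

lemma tendsto_tmulP_mul_tmul (b b' : B) (k : K) :
    Tendsto (fun n => τ.tmul b (P mu n) * τ.tmul b' k) atTop (𝓝 (τ.tmul (b * b') k)) := by
  have heq : (fun n => τ.tmul b (P mu n) * τ.tmul b' k)
      = fun n => tmulR τ (b * b') (P mu n * k) := by
    funext n; rw [τ.tmul_mul_tmul, tmulR_apply]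
  rw [heq]
  exact ((tmulR τ (b * b')).continuous.tendsto k).comp (tendsto_P_mul mu k)

lemma tendsto_tmul_mul_tmulP (b b' : B) (k : K) :
    Tendsto (fun n => τ.tmul b' k * τ.tmul b (P mu n)) atTop (𝓝 (τ.tmul (b' * b) k)) := by
  have heq : (fun n => τ.tmul b' k * τ.tmul b (P mu n))
      = fun n => tmulR τ (b' * b) (k * P mu n) := by
    funext n; rw [τ.tmul_mul_tmul, tmulR_apply]
  rw [heq]
  exact ((tmulR τ (b' * b)).continuous.tendsto k).comp (tendsto_mul_P mu k)

lemma cauchySeq_tmulP_mul (b : B) (t : T) :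
    CauchySeq (fun n => τ.tmul b (P mu n) * t) := by
  refine cauchySeq_of_dense (F := fun n x => τ.tmul b (P mu n) * x) (C := ‖b‖)
    (norm_nonneg b) (fun n x x' => ?_) τ.dense_span (fun s hs => ?_) t
  · rw [dist_eq_norm, dist_eq_norm, ← mul_sub]
    calc ‖τ.tmul b (P mu n) * (x - x')‖ ≤ ‖τ.tmul b (P mu n)‖ * ‖x - x'‖ := norm_mul_le _ _
      _ ≤ ‖b‖ * ‖x - x'‖ :=
          mul_le_mul_of_nonneg_right (norm_tmulP_le mu τ b n) (norm_nonneg _)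
  · -- s in the span of elementary tensors: the sequence converges
    have : ∃ y, Tendsto (fun n => τ.tmul b (P mu n) * s) atTop (𝓝 y) := by
      induction hs using Submodule.span_induction with
      | mem x hx =>
        obtain ⟨b', k, rfl⟩ := hx
        exact ⟨_, tendsto_tmulP_mul_tmul mu τ b b' k⟩
      | zero => exact ⟨0, by simpa using tendsto_const_nhds⟩
      | add x y _ _ hx hy =>
        obtain ⟨y1, h1⟩ := hx; obtain ⟨y2, h2⟩ := hy
        exact ⟨y1 + y2, by simpa [mul_add] using h1.add h2⟩
      | smul c x _ hx =>
        obtain ⟨y1, h1⟩ := hx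
        exact ⟨c • y1, by simpa [mul_smul_comm] using h1.const_smul c⟩
    obtain ⟨y, hy⟩ := this
    exact hy.cauchySeq

lemma cauchySeq_mul_tmulP (b : B) (t : T) :
    CauchySeq (fun n => t * τ.tmul b (P mu n)) := by
  refine cauchySeq_of_dense (F := fun n x => x * τ.tmul b (P mu n)) (C := ‖b‖)
    (norm_nonneg b) (fun n x x' => ?_) τ.dense_span (fun s hs => ?_) t
  · rw [dist_eq_norm, dist_eq_norm, ← sub_mul]
    calc ‖(x - x') * τ.tmul b (P mu n)‖ ≤ ‖x - x'‖ * ‖τ.tmul b (P mu n)‖ := norm_mul_le _ _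
      _ ≤ ‖x - x'‖ * ‖b‖ :=
          mul_le_mul_of_nonneg_left (norm_tmulP_le mu τ b n) (norm_nonneg _)
      _ = ‖b‖ * ‖x - x'‖ := mul_comm _ _
  · have : ∃ y, Tendsto (fun n => s * τ.tmul b (P mu n)) atTop (𝓝 y) := by
      induction hs using Submodule.span_induction with
      | mem x hx =>
        obtain ⟨b', k, rfl⟩ := hx
        exact ⟨_, tendsto_tmul_mul_tmulP mu τ b b' k⟩
      | zero => exact ⟨0, by simpa using tendsto_const_nhds⟩
      | add x y _ _ hx hy =>
        obtain ⟨y1, h1⟩ := hx; obtain ⟨y2, h2⟩ := hy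
        exact ⟨y1 + y2, by simpa [add_mul] using h1.add h2⟩
      | smul c x _ hx =>
        obtain ⟨y1, h1⟩ := hx
        exact ⟨c • y1, by simpa [smul_mul_assoc] using h1.const_smul c⟩
    obtain ⟨y, hy⟩ := this
    exact hy.cauchySeq

/-- the left action of `b ⊗ 1` -/
def wfstFun (b : B) (t : T) : T := limUnder atTop (fun n => τ.tmul b (P mu n) * t)

/-- the right action of `b ⊗ 1` -/
def wsndFun (b : B) (t : T) : T := limUnder atTop (fun n => t * τ.tmul b (P mu n))

lemma wfstFun_tendsto (b : B) (t : T) :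
    Tendsto (fun n => τ.tmul b (P mu n) * t) atTop (𝓝 (wfstFun mu τ b t)) :=
  (cauchySeq_tmulP_mul mu τ b t).tendsto_limUnder

lemma wsndFun_tendsto (b : B) (t : T) :
    Tendsto (fun n => t * τ.tmul b (P mu n)) atTop (𝓝 (wsndFun mu τ b t)) :=
  (cauchySeq_mul_tmulP mu τ b t).tendsto_limUnder

lemma wfstFun_tmul (b b' : B) (k : K) :
    wfstFun mu τ b (τ.tmul b' k) = τ.tmul (b * b') k :=
  tendsto_nhds_unique (wfstFun_tendsto mu τ b _) (tendsto_tmulP_mul_tmul mu τ b b' k)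

lemma wsndFun_tmul (b b' : B) (k : K) :
    wsndFun mu τ b (τ.tmul b' k) = τ.tmul (b' * b) k :=
  tendsto_nhds_unique (wsndFun_tendsto mu τ b _) (tendsto_tmul_mul_tmulP mu τ b b' k)

lemma norm_wfstFun_le (b : B) (t : T) : ‖wfstFun mu τ b t‖ ≤ ‖b‖ * ‖t‖ := by
  refine le_of_tendsto (wfstFun_tendsto mu τ b t).norm (Eventually.of_forall fun n => ?_)
  calc ‖τ.tmul b (P mu n) * t‖ ≤ ‖τ.tmul b (P mu n)‖ * ‖t‖ := norm_mul_le _ _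
    _ ≤ ‖b‖ * ‖t‖ := mul_le_mul_of_nonneg_right (norm_tmulP_le mu τ b n) (norm_nonneg _)

lemma norm_wsndFun_le (b : B) (t : T) : ‖wsndFun mu τ b t‖ ≤ ‖b‖ * ‖t‖ := by
  refine le_of_tendsto (wsndFun_tendsto mu τ b t).norm (Eventually.of_forall fun n => ?_)
  calc ‖t * τ.tmul b (P mu n)‖ ≤ ‖t‖ * ‖τ.tmul b (P mu n)‖ := norm_mul_le _ _
    _ ≤ ‖t‖ * ‖b‖ := mul_le_mul_of_nonneg_left (norm_tmulP_le mu τ b n) (norm_nonneg _)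
    _ = ‖b‖ * ‖t‖ := mul_comm _ _

/-- the multiplier `b ⊗ 1 ∈ M(B ⊗ K)` -/
def w (b : B) : 𝓜(ℂ, T) where
  fst := LinearMap.mkContinuous
    { toFun := wfstFun mu τ b
      map_add' := fun t s => tendsto_nhds_unique (wfstFun_tendsto mu τ b (t + s))
        (by simpa [mul_add] using (wfstFun_tendsto mu τ b t).add (wfstFun_tendsto mu τ b s))
      map_smul' := fun c t => tendsto_nhds_unique (wfstFun_tendsto mu τ b (c • t))
        (by simpa [mul_smul_comm] using (wfstFun_tendsto mu τ b t).const_smul c) }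
    ‖b‖ (norm_wfstFun_le mu τ b)
  snd := LinearMap.mkContinuous
    { toFun := wsndFun mu τ b
      map_add' := fun t s => tendsto_nhds_unique (wsndFun_tendsto mu τ b (t + s))
        (by simpa [add_mul] using (wsndFun_tendsto mu τ b t).add (wsndFun_tendsto mu τ b s))
      map_smul' := fun c t => tendsto_nhds_unique (wsndFun_tendsto mu τ b (c • t))
        (by simpa [smul_mul_assoc] using (wsndFun_tendsto mu τ b t).const_smul c) }
    ‖b‖ (norm_wsndFun_le mu τ b)
  central := fun s t => by
    show wsndFun mu τ b s * t = s * wfstFun mu τ b t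
    refine tendsto_nhds_unique (f := fun n => s * τ.tmul b (P mu n) * t) (l := atTop) ?_ ?_
    · exact (wsndFun_tendsto mu τ b s).mul tendsto_const_nhds
    · have h2 := Tendsto.const_mul s (wfstFun_tendsto mu τ b t)
      simpa [mul_assoc] using h2

lemma w_fst (b : B) (t : T) : (w mu τ b).fst t = wfstFun mu τ b t := rfl
lemma w_snd (b : B) (t : T) : (w mu τ b).snd t = wsndFun mu τ b t := rfl

lemma w_mul_mcoe (b b' : B) (k : K) :
    w mu τ b * (τ.tmul b' k : 𝓜(ℂ, T)) = ((τ.tmul (b * b') k : T) : 𝓜(ℂ, T)) := by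
  rw [mul_mcoe]
  congr 1
  rw [w_fst, wfstFun_tmul]

lemma mcoe_mul_w (b b' : B) (k : K) :
    (τ.tmul b' k : 𝓜(ℂ, T)) * w mu τ b = ((τ.tmul (b' * b) k : T) : 𝓜(ℂ, T)) := by
  rw [mcoe_mul]
  congr 1
  rw [w_snd, wsndFun_tmul]

/-- multipliers of `T` agreeing against all elementary tensors are equal -/
lemma mcoe_ext_tensor {x y : 𝓜(ℂ, T)}
    (h : ∀ b k, x * (τ.tmul b k : 𝓜(ℂ, T)) = y * (τ.tmul b k : 𝓜(ℂ, T))) : x = y := by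
  refine mcoe_ext fun t => ?_
  refine forall_mem_of_dense_T τ {t : T | x * (t : 𝓜(ℂ, T)) = y * (t : 𝓜(ℂ, T))} ?_ h ?_ ?_ ?_ t
  · exact isClosed_eq (continuous_const.mul isometry_mcoe.continuous)
      (continuous_const.mul isometry_mcoe.continuous)
  · intro s t hs ht
    simp only [Set.mem_setOf_eq] at *
    rw [mcoe_add, mul_add, mul_add, hs, ht]
  · intro c t ht
    simp only [Set.mem_setOf_eq] at *
    rw [mcoe_smul, mul_smul_comm, mul_smul_comm, ht]
  · simp only [Set.mem_setOf_eq, mcoe_zero, mul_zero]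

end WSection

section RelCommSection
variable {K B T : Type*} [NonUnitalCStarAlgebra K] [NonUnitalCStarAlgebra B]
  [NonUnitalCStarAlgebra T]

variable (mu : MatrixUnits K) (τ : CStarTensor B K T)

lemma sub_tmul (b b' : B) (k : K) : τ.tmul (b - b') k = τ.tmul b k - τ.tmul b' k := by
  have h1 : b - b' = b + (-1 : ℂ) • b' := by simp [sub_eq_add_neg]
  rw [h1, τ.add_tmul, τ.smul_tmul]
  simp [sub_eq_add_neg]

lemma tmul_left_inj (i j : ℕ) {c c' : B} (h : τ.tmul c (mu.u i j) = τ.tmul c' (mu.u i j)) :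
    c = c' := by
  have h0 : τ.tmul (c - c') (mu.u i j) = 0 := by rw [sub_tmul, h, sub_self]
  have h1 : ‖c - c'‖ = 0 := by
    have := τ.norm_tmul (c - c') (mu.u i j)
    rw [h0, norm_zero, norm_u mu] at this
    simpa using this.symm
  rw [sub_eq_zero.mp (norm_eq_zero.mp h1)]

variable (ι : K →⋆ₙₐ[ℂ] 𝓜(ℂ, T)) (hι₁ : IsOneTensorId τ ι)

section
include hι₁

lemma w_iota_comm (b : B) (k : K) : ι k * w mu τ b = w mu τ b * ι k := by
  refine mcoe_ext_tensor τ fun b' k' => ?_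
  rw [mul_assoc, mul_assoc, w_mul_mcoe, (hι₁ k b' k').1, (hι₁ k (b * b') k').1, w_mul_mcoe]

lemma w_mul_iota_eq (b : B) (k : K) :
    w mu τ b * ι k = ((τ.tmul b k : T) : 𝓜(ℂ, T)) := by
  refine mcoe_ext_tensor τ fun b' k' => ?_
  rw [mul_assoc, (hι₁ k b' k').1, w_mul_mcoe, ← mcoe_mul_mcoe, τ.tmul_mul_tmul]

lemma iota_mul_w_eq (b : B) (k : K) :
    ι k * w mu τ b = ((τ.tmul b k : T) : 𝓜(ℂ, T)) := by
  rw [w_iota_comm mu τ ι hι₁, w_mul_iota_eq mu τ ι hι₁]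

lemma w_mem_relComm (b : B) : w mu τ b ∈ relComm ι := by
  intro k
  exact ⟨w_iota_comm mu τ ι hι₁ b k,
    ⟨τ.tmul b k, (w_mul_iota_eq mu τ ι hι₁ b k).symm⟩⟩

end

lemma scalar_corner (i j : ℕ) (k : K) :
    ∃ c : ℂ, mu.u i i * k * mu.u j j = c • mu.u i j := by
  refine forall_mem_of_dense_K mu
    {k : K | ∃ c : ℂ, mu.u i i * k * mu.u j j = c • mu.u i j} ?_ ?_ ?_ ?_ ?_ k
  · have : {k : K | ∃ c : ℂ, mu.u i i * k * mu.u j j = c • mu.u i j}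
        = (fun k => mu.u i i * k * mu.u j j) ⁻¹' ((ℂ ∙ (mu.u i j)) : Set K) := by
      ext k
      simp only [Set.mem_preimage, SetLike.mem_coe, Submodule.mem_span_singleton,
        Set.mem_setOf_eq]
      exact ⟨fun ⟨c, hc⟩ => ⟨c, hc.symm⟩, fun ⟨c, hc⟩ => ⟨c, hc.symm⟩⟩
    rw [this]
    exact ((ℂ ∙ (mu.u i j)).closed_of_finiteDimensional).preimage
      ((continuous_const.mul continuous_id).mul continuous_const)
  · intro i' j'
    by_cases hi : i = i'
    · by_cases hj : j' = j
      · subst hi; subst hj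
        refine ⟨1, ?_⟩
        rw [mu.u_mul, if_pos rfl, mu.u_mul, if_pos rfl, one_smul]
      · subst hi
        refine ⟨0, ?_⟩
        rw [mu.u_mul, if_pos rfl, mu.u_mul, if_neg hj, zero_smul]
    · refine ⟨0, ?_⟩
      rw [mu.u_mul, if_neg hi, zero_mul, zero_smul]
  · rintro s t ⟨c, hc⟩ ⟨c', hc'⟩
    exact ⟨c + c', by rw [mul_add, add_mul, hc, hc', add_smul]⟩
  · rintro a t ⟨c, hc⟩
    exact ⟨a * c, by rw [mul_smul_comm, smul_mul_assoc, hc, smul_smul]⟩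
  · exact ⟨0, by simp⟩

lemma corner_struct (i j : ℕ) (t : T)
    (h1 : ι (mu.u i i) * (t : 𝓜(ℂ, T)) = (t : 𝓜(ℂ, T)))
    (h2 : (t : 𝓜(ℂ, T)) * ι (mu.u j j) = (t : 𝓜(ℂ, T))) (hι₁ : IsOneTensorId τ ι) :
    ∃ c : B, t = τ.tmul c (mu.u i j) := by
  have key : ∀ s : T, ∃ c : B,
      ι (mu.u i i) * (s : 𝓜(ℂ, T)) * ι (mu.u j j) = ((τ.tmul c (mu.u i j) : T) : 𝓜(ℂ, T)) := by
    refine forall_mem_of_dense_T τ {s : T | ∃ c : B,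
      ι (mu.u i i) * (s : 𝓜(ℂ, T)) * ι (mu.u j j) = ((τ.tmul c (mu.u i j) : T) : 𝓜(ℂ, T))}
      ?_ ?_ ?_ ?_ ?_
    · -- closedness
      have hGiso : Isometry (fun c : B => ((τ.tmul c (mu.u i j) : T) : 𝓜(ℂ, T))) := by
        refine Isometry.of_dist_eq fun c c' => ?_
        rw [dist_eq_norm, dist_eq_norm]
        have : ((τ.tmul c (mu.u i j) : T) : 𝓜(ℂ, T)) - ((τ.tmul c' (mu.u i j) : T) : 𝓜(ℂ, T))
            = ((τ.tmul (c - c') (mu.u i j) : T) : 𝓜(ℂ, T)) := by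
          rw [sub_tmul]
          rw [sub_eq_add_neg, sub_eq_add_neg]
          rw [show τ.tmul c (mu.u i j) + -τ.tmul c' (mu.u i j)
              = τ.tmul c (mu.u i j) + (-1 : ℂ) • τ.tmul c' (mu.u i j) by simp]
          rw [mcoe_add, mcoe_smul]
          simp
        rw [this, norm_mcoe, τ.norm_tmul, norm_u mu, mul_one]
      have hrange : IsClosed (Set.range (fun c : B => ((τ.tmul c (mu.u i j) : T) : 𝓜(ℂ, T)))) :=
        hGiso.isClosedEmbedding.isClosed_range
      have : {s : T | ∃ c : B,
          ι (mu.u i i) * (s : 𝓜(ℂ, T)) * ι (mu.u j j) = ((τ.tmul c (mu.u i j) : T) : 𝓜(ℂ, T))}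
          = (fun s : T => ι (mu.u i i) * (s : 𝓜(ℂ, T)) * ι (mu.u j j)) ⁻¹'
            (Set.range (fun c : B => ((τ.tmul c (mu.u i j) : T) : 𝓜(ℂ, T)))) := by
        ext s
        simp only [Set.mem_preimage, Set.mem_range, Set.mem_setOf_eq]
        exact ⟨fun ⟨c, hc⟩ => ⟨c, hc.symm⟩, fun ⟨c, hc⟩ => ⟨c, hc.symm⟩⟩
      rw [this]
      exact hrange.preimage
        ((continuous_const.mul isometry_mcoe.continuous).mul continuous_const)
    · -- elementary tensors
      intro b k
      obtain ⟨c, hc⟩ := scalar_corner mu i j k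
      refine ⟨c • b, ?_⟩
      rw [(hι₁ (mu.u i i) b k).1, (hι₁ (mu.u j j) b _).2, hc, τ.tmul_smul,
        τ.smul_tmul]
    · rintro s t ⟨c, hc⟩ ⟨c', hc'⟩
      refine ⟨c + c', ?_⟩
      rw [mcoe_add, mul_add, add_mul, hc, hc', τ.add_tmul, mcoe_add]
    · rintro a t ⟨c, hc⟩
      refine ⟨a • c, ?_⟩
      rw [mcoe_smul, mul_smul_comm, smul_mul_assoc, hc, τ.smul_tmul, mcoe_smul]
    · exact ⟨0, by rw [mcoe_zero, mul_zero, zero_mul, zero_tmul, mcoe_zero]⟩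
  obtain ⟨c, hc⟩ := key t
  rw [h1, h2] at hc
  exact ⟨c, mcoe_injective hc⟩

end RelCommSection

section MainLemmas
variable {K B T : Type*} [NonUnitalCStarAlgebra K] [NonUnitalCStarAlgebra B]
  [NonUnitalCStarAlgebra T]

variable (mu : MatrixUnits K) (τ : CStarTensor B K T)
variable (ι : K →⋆ₙₐ[ℂ] 𝓜(ℂ, T))

lemma iota_continuous : Continuous ι :=
  AddMonoidHomClass.continuous_of_bound ι 1
    (fun a => by simpa [one_mul] using NonUnitalStarAlgHom.norm_apply_le ι a)

variable (hι₁ : IsOneTensorId τ ι)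
include hι₁

lemma main_corner (y : 𝓜(ℂ, T)) (hy : y ∈ relComm ι) (i j : ℕ) :
    ∃ c : B, y * ι (mu.u i j) = ((τ.tmul c (mu.u i j) : T) : 𝓜(ℂ, T)) := by
  obtain ⟨t, ht⟩ := (hy (mu.u i j)).2
  have hii : ι (mu.u i i) * (t : 𝓜(ℂ, T)) = (t : 𝓜(ℂ, T)) := by
    rw [ht, ← mul_assoc, (hy (mu.u i i)).1, mul_assoc, ← map_mul, mu.u_mul, if_pos rfl]
  have hjj : (t : 𝓜(ℂ, T)) * ι (mu.u j j) = (t : 𝓜(ℂ, T)) := by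
    rw [ht, mul_assoc, ← map_mul, mu.u_mul, if_pos rfl]
  obtain ⟨c, hc⟩ := corner_struct mu τ ι i j t hii hjj hι₁
  exact ⟨c, by rw [← ht, hc]⟩

lemma relComm_iota_form (y : 𝓜(ℂ, T)) (hy : y ∈ relComm ι) :
    ∃ c : B, ∀ i j, y * ι (mu.u i j) = ((τ.tmul c (mu.u i j) : T) : 𝓜(ℂ, T)) := by
  obtain ⟨c, hc⟩ := main_corner mu τ ι hι₁ y hy 0 0
  refine ⟨c, fun i j => ?_⟩
  obtain ⟨cij, hcij⟩ := main_corner mu τ ι hι₁ y hy i j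
  obtain ⟨c0j, hc0j⟩ := main_corner mu τ ι hι₁ y hy 0 j
  have hA : ι (mu.u 0 i) * (y * ι (mu.u i j)) = y * ι (mu.u 0 j) := by
    rw [← mul_assoc, (hy (mu.u 0 i)).1, mul_assoc, ← map_mul, mu.u_mul, if_pos rfl]
  have hA2 : ι (mu.u 0 i) * ((τ.tmul cij (mu.u i j) : T) : 𝓜(ℂ, T))
      = ((τ.tmul cij (mu.u 0 j) : T) : 𝓜(ℂ, T)) := by
    rw [(hι₁ (mu.u 0 i) cij (mu.u i j)).1, mu.u_mul, if_pos rfl]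
  have h1 : c0j = cij := by
    refine tmul_left_inj mu τ 0 j (mcoe_injective ?_)
    rw [← hc0j, ← hA, hcij, hA2]
  have hB : (y * ι (mu.u 0 j)) * ι (mu.u j 0) = y * ι (mu.u 0 0) := by
    rw [mul_assoc, ← map_mul, mu.u_mul, if_pos rfl]
  have hB2 : ((τ.tmul c0j (mu.u 0 j) : T) : 𝓜(ℂ, T)) * ι (mu.u j 0)
      = ((τ.tmul c0j (mu.u 0 0) : T) : 𝓜(ℂ, T)) := by
    rw [(hι₁ (mu.u j 0) c0j (mu.u 0 j)).2, mu.u_mul, if_pos rfl]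
  have h2 : c = c0j := by
    refine tmul_left_inj mu τ 0 0 (mcoe_injective ?_)
    rw [← hc, ← hB, hc0j, hB2]
  rw [hcij, h2, h1]

include mu in
lemma relComm_mul_form (y : 𝓜(ℂ, T)) (hy : y ∈ relComm ι) :
    ∃ c : B, ∀ k : K, y * ι k = ((τ.tmul c k : T) : 𝓜(ℂ, T)) := by
  obtain ⟨c, hc⟩ := relComm_iota_form mu τ ι hι₁ y hy
  refine ⟨c, ?_⟩
  refine forall_mem_of_dense_K mu
    {k : K | y * ι k = ((τ.tmul c k : T) : 𝓜(ℂ, T))} ?_ hc ?_ ?_ ?_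
  · refine isClosed_eq (continuous_const.mul (iota_continuous ι)) ?_
    exact isometry_mcoe.continuous.comp (tmulR τ c).continuous
  · intro s t hs ht
    simp only [Set.mem_setOf_eq] at *
    rw [map_add, mul_add, hs, ht, τ.tmul_add, mcoe_add]
  · intro a t ht
    simp only [Set.mem_setOf_eq] at *
    rw [map_smul, mul_smul_comm, ht, τ.tmul_smul, mcoe_smul]
  · simp only [Set.mem_setOf_eq, map_zero, mul_zero, tmul_zero, mcoe_zero]

end MainLemmas

end MStmt

open MStmt in
/-- For any C⋆-algebra `B`, the multiplier algebra of the relative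
commutant `C(B ⊗ 𝒦, 1 ⊗ id)` is `M(B) ⊗ 1_𝒦`, viewed inside `M(B ⊗ 𝒦)`.  As in
Statement 4, the canonical copy of `M(C(B ⊗ 𝒦, 1 ⊗ id))` inside `M(B ⊗ 𝒦)` is the
idealizer of the nondegenerate C⋆-subalgebra `C(B ⊗ 𝒦, 1 ⊗ id)`; and a multiplier
`x ∈ M(B ⊗ 𝒦)` is of the form `m ⊗ 1_𝒦` for `m ∈ M(B)` precisely when it acts on
elementary tensors by `x·(b ⊗ k) = (m·b) ⊗ k` and `(b ⊗ k)·x = (b·m) ⊗ k`. -/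
theorem multiplier_relComm_oneTensorId_eq_multiplier_tensor_one
    {K B T : Type*} [NonUnitalCStarAlgebra K] [NonUnitalCStarAlgebra B]
    [NonUnitalCStarAlgebra T]
    (hK : IsCompactOperatorsAlgebra K)
    (τ : CStarTensor B K T)
    (ι : K →⋆ₙₐ[ℂ] 𝓜(ℂ, T)) (hι₁ : IsOneTensorId τ ι) (hι₂ : Nondegenerate ι) :
    {x : 𝓜(ℂ, T) | ∀ c ∈ relComm ι, x * c ∈ relComm ι ∧ c * x ∈ relComm ι} =
      {x : 𝓜(ℂ, T) | ∃ m : 𝓜(ℂ, B), ∀ (b : B) (k : K),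
        (∃ c : B, (c : 𝓜(ℂ, B)) = m * b ∧
          x * (τ.tmul b k : 𝓜(ℂ, T)) = (τ.tmul c k : 𝓜(ℂ, T))) ∧
        (∃ c' : B, (c' : 𝓜(ℂ, B)) = (b : 𝓜(ℂ, B)) * m ∧
          (τ.tmul b k : 𝓜(ℂ, T)) * x = (τ.tmul c' k : 𝓜(ℂ, T)))} := by
  obtain ⟨mu⟩ := hK
  ext x
  simp only [Set.mem_setOf_eq]
  constructor
  · -- hard direction: the idealizer is contained in M(B) ⊗ 1
    intro hx
    -- the left multiplication function
    have hLex : ∀ b : B, ∃ c : B, ∀ k : K,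
        x * ((τ.tmul b k : T) : 𝓜(ℂ, T)) = ((τ.tmul c k : T) : 𝓜(ℂ, T)) := by
      intro b
      obtain ⟨c, hc⟩ := relComm_mul_form mu τ ι hι₁ (x * w mu τ b)
        ((hx _ (w_mem_relComm mu τ ι hι₁ b)).1)
      refine ⟨c, fun k => ?_⟩
      rw [← w_mul_iota_eq mu τ ι hι₁ b k, ← mul_assoc, hc k]
    -- the right multiplication function
    have hRex : ∀ b : B, ∃ c : B, ∀ k : K,
        ((τ.tmul b k : T) : 𝓜(ℂ, T)) * x = ((τ.tmul c k : T) : 𝓜(ℂ, T)) := by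
      intro b
      have hymem := (hx _ (w_mem_relComm mu τ ι hι₁ b)).2
      obtain ⟨c, hc⟩ := relComm_mul_form mu τ ι hι₁ (w mu τ b * x) hymem
      refine ⟨c, fun k => ?_⟩
      have h1 : ((τ.tmul b k : T) : 𝓜(ℂ, T)) * x = (w mu τ b * x) * ι k := by
        rw [← iota_mul_w_eq mu τ ι hι₁ b k, mul_assoc, (hymem k).1]
      rw [h1, hc k]
    choose L hL using hLex
    choose R hR using hRex
    have he : mu.u 0 0 * mu.u 0 0 = mu.u 0 0 := by rw [mu.u_mul, if_pos rfl]
    have inj : ∀ {c c' : B},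
        ((τ.tmul c (mu.u 0 0) : T) : 𝓜(ℂ, T)) = ((τ.tmul c' (mu.u 0 0) : T) : 𝓜(ℂ, T)) →
          c = c' := fun h => tmul_left_inj mu τ 0 0 (mcoe_injective h)
    have hLadd : ∀ b b' : B, L (b + b') = L b + L b' := by
      intro b b'
      have h1 := hL (b + b') (mu.u 0 0)
      rw [τ.add_tmul, mcoe_add, mul_add, hL b _, hL b' _, ← mcoe_add, ← τ.add_tmul] at h1
      exact (inj h1).symm
    have hLsmul : ∀ (a : ℂ) (b : B), L (a • b) = a • L b := by
      intro a b
      have h1 := hL (a • b) (mu.u 0 0)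
      rw [τ.smul_tmul, mcoe_smul, mul_smul_comm, hL b _, ← mcoe_smul, ← τ.smul_tmul] at h1
      exact (inj h1).symm
    have hRadd : ∀ b b' : B, R (b + b') = R b + R b' := by
      intro b b'
      have h1 := hR (b + b') (mu.u 0 0)
      rw [τ.add_tmul, mcoe_add, add_mul, hR b _, hR b' _, ← mcoe_add, ← τ.add_tmul] at h1
      exact (inj h1).symm
    have hRsmul : ∀ (a : ℂ) (b : B), R (a • b) = a • R b := by
      intro a b
      have h1 := hR (a • b) (mu.u 0 0)
      rw [τ.smul_tmul, mcoe_smul, smul_mul_assoc, hR b _, ← mcoe_smul, ← τ.smul_tmul] at h1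
      exact (inj h1).symm
    have hLbound : ∀ b : B, ‖L b‖ ≤ ‖x‖ * ‖b‖ := by
      intro b
      calc ‖L b‖ = ‖((τ.tmul (L b) (mu.u 0 0) : T) : 𝓜(ℂ, T))‖ := by
            rw [norm_mcoe, τ.norm_tmul, norm_u, mul_one]
        _ = ‖x * ((τ.tmul b (mu.u 0 0) : T) : 𝓜(ℂ, T))‖ := by rw [hL]
        _ ≤ ‖x‖ * ‖((τ.tmul b (mu.u 0 0) : T) : 𝓜(ℂ, T))‖ := norm_mul_le _ _
        _ = ‖x‖ * ‖b‖ := by rw [norm_mcoe, τ.norm_tmul, norm_u, mul_one]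
    have hRbound : ∀ b : B, ‖R b‖ ≤ ‖x‖ * ‖b‖ := by
      intro b
      calc ‖R b‖ = ‖((τ.tmul (R b) (mu.u 0 0) : T) : 𝓜(ℂ, T))‖ := by
            rw [norm_mcoe, τ.norm_tmul, norm_u, mul_one]
        _ = ‖((τ.tmul b (mu.u 0 0) : T) : 𝓜(ℂ, T)) * x‖ := by rw [hR]
        _ ≤ ‖((τ.tmul b (mu.u 0 0) : T) : 𝓜(ℂ, T))‖ * ‖x‖ := norm_mul_le _ _
        _ = ‖x‖ * ‖b‖ := by rw [norm_mcoe, τ.norm_tmul, norm_u, mul_one, mul_comm]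
    have hcentral : ∀ s t : B, R s * t = s * L t := by
      intro s t
      refine inj ?_
      have h1 : τ.tmul (R s * t) (mu.u 0 0) = τ.tmul (R s) (mu.u 0 0) * τ.tmul t (mu.u 0 0) := by
        rw [τ.tmul_mul_tmul, he]
      have h2 : τ.tmul (s * L t) (mu.u 0 0)
          = τ.tmul s (mu.u 0 0) * τ.tmul (L t) (mu.u 0 0) := by
        rw [τ.tmul_mul_tmul, he]
      rw [h1, h2, mcoe_mul_mcoe, mcoe_mul_mcoe, ← hR s, ← hL t, mul_assoc]
    refine ⟨⟨(LinearMap.mkContinuous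
        ⟨⟨L, hLadd⟩, hLsmul⟩ ‖x‖ hLbound,
      LinearMap.mkContinuous
        ⟨⟨R, hRadd⟩, hRsmul⟩ ‖x‖ hRbound), hcentral⟩, ?_⟩
    intro b k
    constructor
    · refine ⟨L b, ?_, hL b k⟩
      rw [mul_mcoe]
      rfl
    · refine ⟨R b, ?_, hR b k⟩
      rw [mcoe_mul]
      rfl
  · -- easy direction
    rintro ⟨m, hm⟩ c hc
    have hx_t : ∀ (b : B) (k : K),
        x * ((τ.tmul b k : T) : 𝓜(ℂ, T)) = ((τ.tmul (m.fst b) k : T) : 𝓜(ℂ, T)) := by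
      intro b k
      obtain ⟨cbk, h1, h2⟩ := (hm b k).1
      have h3 : cbk = m.fst b := mcoe_injective (by rw [h1, mul_mcoe])
      rw [h2, h3]
    have hx_t' : ∀ (b : B) (k : K),
        ((τ.tmul b k : T) : 𝓜(ℂ, T)) * x = ((τ.tmul (m.snd b) k : T) : 𝓜(ℂ, T)) := by
      intro b k
      obtain ⟨cbk, h1, h2⟩ := (hm b k).2
      have h3 : cbk = m.snd b := mcoe_injective (by rw [h1, mcoe_mul])
      rw [h2, h3]
    have hcomm : ∀ k : K, ι k * x = x * ι k := by
      intro k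
      refine mcoe_ext_tensor τ fun b k' => ?_
      rw [mul_assoc, mul_assoc, hx_t b k', (hι₁ k (m.fst b) k').1, (hι₁ k b k').1,
        hx_t b (k * k')]
    have hmem : ∀ t : T, x * (t : 𝓜(ℂ, T)) ∈ Set.range ((↑) : T → 𝓜(ℂ, T)) := by
      refine forall_mem_of_dense_T τ
        {t : T | x * (t : 𝓜(ℂ, T)) ∈ Set.range ((↑) : T → 𝓜(ℂ, T))} ?_ ?_ ?_ ?_ ?_
      · exact isClosed_range_mcoe.preimage (continuous_const.mul isometry_mcoe.continuous)
      · exact fun b k => ⟨τ.tmul (m.fst b) k, (hx_t b k).symm⟩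
      · rintro s t ⟨a, ha⟩ ⟨a', ha'⟩
        exact ⟨a + a', by rw [mcoe_add, mcoe_add, mul_add, ha, ha']⟩
      · rintro a t ⟨a', ha'⟩
        exact ⟨a • a', by rw [mcoe_smul, mcoe_smul, mul_smul_comm, ha']⟩
      · exact ⟨0, by rw [mcoe_zero, mul_zero]⟩
    have hmem' : ∀ t : T, (t : 𝓜(ℂ, T)) * x ∈ Set.range ((↑) : T → 𝓜(ℂ, T)) := by
      refine forall_mem_of_dense_T τ
        {t : T | (t : 𝓜(ℂ, T)) * x ∈ Set.range ((↑) : T → 𝓜(ℂ, T))} ?_ ?_ ?_ ?_ ?_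
      · exact isClosed_range_mcoe.preimage (isometry_mcoe.continuous.mul continuous_const)
      · exact fun b k => ⟨τ.tmul (m.snd b) k, (hx_t' b k).symm⟩
      · rintro s t ⟨a, ha⟩ ⟨a', ha'⟩
        exact ⟨a + a', by rw [mcoe_add, mcoe_add, add_mul, ha, ha']⟩
      · rintro a t ⟨a', ha'⟩
        exact ⟨a • a', by rw [mcoe_smul, mcoe_smul, smul_mul_assoc, ha']⟩
      · exact ⟨0, by rw [mcoe_zero, zero_mul]⟩
    constructor
    · intro k
      constructor
      · rw [← mul_assoc, hcomm k, mul_assoc, (hc k).1, ← mul_assoc]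
      · obtain ⟨t, ht⟩ := (hc k).2
        rw [mul_assoc, ← ht]
        exact hmem t
    · intro k
      constructor
      · rw [← mul_assoc, (hc k).1, mul_assoc, hcomm k, ← mul_assoc]
      · obtain ⟨t, ht⟩ := (hc k).2
        rw [mul_assoc, ← hcomm k, ← mul_assoc, ← ht]
        exact hmem' t
end
end
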